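/- arXiv:1809.02832 — 7 statements merged into one kernel-verified Lean document; each statement's English description precedes it below -/
import Mathlib

section
/- Define s(n,x) = Σ_{k=1}^n sin²(x·(k-1)!/k). Then for every integer n > 1, the floor of s(n, π/2) equals π(n), the number of primes ≤ n. -/
/-!
By Wilson's theorem `(p - 1)! = p q - 1` with `q` odd for every prime `p`, so the `p`-th term is
`cos² (π / (2p)) = 1 - sin² (π / (2p))`. For composite `k ≠ 4` we have `2k ∣ (k - 1)!`, so the
`k`-th term vanishes. Hence the sum is `π(n) + 1 + [4 ≤ n] / 2 - ∑_{p ≤ n} sin² (π / (2p))`; the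
primes `2, 3` contribute exactly `3/4` to the last sum, and `sin² x ≤ x²` with
`∑_{k > 4} 1 / k² ≤ 1 / 4` bounds the rest by `π² / 16 < 3 / 4`.
-/

open Real Finset Nat

theorem Nat.mul_dvd_factorial_of_dvd {d c n : ℕ} (hd : d ∣ (c - 1)!) (hc : 0 < c) (hcn : c ≤ n) :
    d * c ∣ n ! := by
  calc d * c ∣ (c - 1)! * c := Nat.mul_dvd_mul_right hd c
    _ = c ! := by rw [mul_comm, Nat.mul_factorial_pred hc.ne']
    _ ∣ n ! := Nat.factorial_dvd_factorial hcn

theorem Nat.mul_dvd_factorial {a c n : ℕ} (ha : 0 < a) (hac : a < c) (hcn : c ≤ n) :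
    a * c ∣ n ! :=
  Nat.mul_dvd_factorial_of_dvd (Nat.dvd_factorial ha (by omega)) (by omega) hcn

theorem Nat.two_mul_dvd_factorial_pred {k : ℕ} (hk : 1 < k) (hk4 : k ≠ 4) (hkp : ¬ k.Prime) :
    2 * k ∣ (k - 1)! := by
  -- `k = 2b`: use `2 < b < 2(b - 1) < k`; `k = ab` with `3 ≤ a ≤ b`: use `a < 2b < k`.
  rcases Nat.even_or_odd k with ⟨b, rfl⟩ | hodd
  · obtain ⟨m, rfl⟩ : ∃ m, b = m + 3 := ⟨b - 3, by
      have : b ≠ 1 := by rintro rfl; exact hkp Nat.prime_two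
      omega⟩
    have h2m : 2 * (m + 3) ∣ (2 * (m + 2) - 1)! :=
      Nat.mul_dvd_factorial (by norm_num) (by omega) (by omega)
    calc 2 * (m + 3 + (m + 3)) ∣ 2 * (m + 3) * (2 * (m + 2)) := Dvd.intro (m + 2) (by ring)
      _ ∣ (m + 3 + (m + 3) - 1)! := Nat.mul_dvd_factorial_of_dvd h2m (by omega) (by omega)
  · obtain ⟨a, b, ha, hab, rfl⟩ : ∃ a b, 3 ≤ a ∧ a ≤ b ∧ a * b = k := by
      refine ⟨k.minFac, k / k.minFac, ?_, Nat.minFac_le_div (by omega) hkp,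
        Nat.mul_div_cancel' k.minFac_dvd⟩
      have := (Nat.minFac_prime hk.ne').two_le
      have : k.minFac ≠ 2 := fun h => by
        rw [Nat.minFac_eq_two_iff] at h
        exact Nat.not_even_iff_odd.2 hodd (even_iff_two_dvd.2 h)
      omega
    calc 2 * (a * b) = a * (2 * b) := by ring
      _ ∣ (a * b - 1)! := Nat.mul_dvd_factorial (by omega) (by omega)
        (by have := Nat.mul_le_mul_right b ha; omega)

theorem Nat.Prime.exists_odd_mul_eq_factorial_pred_add_one {p : ℕ} (hp : p.Prime) :
    ∃ q, Odd q ∧ (p - 1)! + 1 = p * q := by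
  have := Fact.mk hp
  obtain ⟨q, hq⟩ : p ∣ (p - 1)! + 1 :=
    (ZMod.natCast_eq_zero_iff _ _).1 (by push_cast [ZMod.wilsons_lemma]; ring)
  refine ⟨q, ?_, hq⟩
  rcases hp.eq_two_or_odd with rfl | hpodd
  · obtain rfl : q = 1 := by simp at hq; omega
    exact odd_one
  · have hfac : Even (p - 1)! :=
      even_iff_two_dvd.2 (Nat.dvd_factorial two_pos (by have := hp.two_le; omega))
    exact (Nat.odd_mul.1 (hq ▸ hfac.add_one)).2

noncomputable def wilsonTerm (k : ℕ) : ℝ := sin (π / 2 * (k - 1)! / k) ^ 2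

theorem wilsonTerm_eq_zero_of_not_prime {k : ℕ} (hk : 1 < k) (hk4 : k ≠ 4) (hkp : ¬ k.Prime) :
    wilsonTerm k = 0 := by
  obtain ⟨m, hm⟩ := Nat.two_mul_dvd_factorial_pred hk hk4 hkp
  have hk0 : (k : ℝ) ≠ 0 := by positivity
  have harg : π / 2 * (k - 1)! / k = m * π := by
    rw [hm]; push_cast; field_simp
  rw [wilsonTerm, harg, sin_nat_mul_pi, zero_pow two_ne_zero]

theorem Nat.Prime.wilsonTerm_eq {p : ℕ} (hp : p.Prime) :
    wilsonTerm p = 1 - sin (π / (2 * p)) ^ 2 := by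
  obtain ⟨q, ⟨m, rfl⟩, hq⟩ := hp.exists_odd_mul_eq_factorial_pred_add_one
  have hp0 : (p : ℝ) ≠ 0 := by exact_mod_cast hp.ne_zero
  have hfac : ((p - 1)! : ℝ) = p * (2 * m + 1) - 1 := by
    rw [eq_sub_iff_add_eq]; exact_mod_cast hq
  have harg : π / 2 * (p - 1)! / p = (π / 2 - π / (2 * p)) + m * π := by
    rw [hfac]; field_simp; ring
  rw [wilsonTerm, harg, sin_add_nat_mul_pi, mul_pow, ← pow_mul, pow_mul', neg_one_sq, one_pow,
    one_mul, sin_pi_div_two_sub, cos_sq']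

theorem wilsonTerm_one : wilsonTerm 1 = 1 := by
  simp [wilsonTerm]

theorem wilsonTerm_two : wilsonTerm 2 = 1 / 2 := by
  rw [Nat.prime_two.wilsonTerm_eq, show π / (2 * (2 : ℕ)) = π / 4 by push_cast; ring,
    sin_pi_div_four, div_pow, sq_sqrt zero_le_two]
  norm_num

theorem wilsonTerm_three : wilsonTerm 3 = 3 / 4 := by
  rw [Nat.prime_three.wilsonTerm_eq, show π / (2 * (3 : ℕ)) = π / 6 by push_cast; ring,
    sin_pi_div_six]
  norm_num

theorem wilsonTerm_four : wilsonTerm 4 = 1 / 2 := by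
  rw [wilsonTerm, show π / 2 * ((4 - 1)! : ℕ) / (4 : ℕ) = π - π / 4 by
    simp [Nat.factorial]; ring, sin_pi_sub, sin_pi_div_four, div_pow, sq_sqrt zero_le_two]
  norm_num

theorem wilsonTerm_sub_indicator_mem_Icc {k : ℕ} (hk : 1 < k) (hk4 : k ≠ 4) :
    wilsonTerm k - (if k.Prime then 1 else 0) ∈ Set.Icc (-(π / (2 * k)) ^ 2) 0 := by
  by_cases hkp : k.Prime
  · rw [hkp.wilsonTerm_eq, if_pos hkp, sub_sub_cancel_left]
    exact ⟨neg_le_neg sin_sq_le_sq, neg_nonpos.2 (sq_nonneg _)⟩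
  · rw [wilsonTerm_eq_zero_of_not_prime hk hk4 hkp, if_neg hkp, sub_zero]
    exact ⟨neg_nonpos.2 (sq_nonneg _), le_rfl⟩

theorem neg_div_le_sum_Ioc_wilsonTerm_sub_indicator {m n : ℕ} (hm : 4 ≤ m) (hmn : m ≤ n) :
    -(π ^ 2 / (4 * m)) ≤ ∑ k ∈ Ioc m n, (wilsonTerm k - if k.Prime then 1 else 0) :=
  calc -(π ^ 2 / (4 * m)) ≤ -(π ^ 2 / 4 * ((m : ℝ)⁻¹ - (n : ℝ)⁻¹)) := by
        have : 0 ≤ π ^ 2 / 4 * (n : ℝ)⁻¹ := by positivity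
        rw [show π ^ 2 / (4 * m) = π ^ 2 / 4 * (m : ℝ)⁻¹ by ring, mul_sub]
        linarith
    _ ≤ -(π ^ 2 / 4 * ∑ k ∈ Ioc m n, ((k : ℝ) ^ 2)⁻¹) := by
        gcongr; exact sum_Ioc_inv_sq_le_sub (by omega) hmn
    _ = ∑ k ∈ Ioc m n, -(π / (2 * k)) ^ 2 := by
        rw [mul_sum, ← sum_neg_distrib]
        refine sum_congr rfl fun k _ => by ring
    _ ≤ _ := sum_le_sum fun k hk =>
        (wilsonTerm_sub_indicator_mem_Icc (by grind) (by grind)).1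

theorem sum_Ioc_wilsonTerm_sub_indicator_nonpos {m n : ℕ} (hm : 4 ≤ m) :
    ∑ k ∈ Ioc m n, (wilsonTerm k - if k.Prime then 1 else 0) ≤ 0 :=
  sum_nonpos fun k hk => (wilsonTerm_sub_indicator_mem_Icc (by grind) (by grind)).2

theorem sum_wilsonTerm_sub_primeCounting_mem_Ico {n : ℕ} (hn : 1 < n) :
    ∑ k ∈ Icc 1 n, wilsonTerm k - n.primeCounting ∈ Set.Ico 0 1 := by
  have hπ : (n.primeCounting : ℝ) = ∑ k ∈ Icc 1 n, if k.Prime then 1 else 0 := by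
    rw [sum_boole, ← primesLE_eq_filter_Icc_one, primesLE_card_eq_primeCounting]
  rw [hπ, ← sum_sub_distrib]
  rcases (by omega : n = 2 ∨ n = 3 ∨ 4 ≤ n) with rfl | rfl | hn4
  · norm_num [sum_Icc_succ_top, -sum_boole, wilsonTerm_one, wilsonTerm_two]
  · norm_num [sum_Icc_succ_top, -sum_boole, wilsonTerm_one, wilsonTerm_two, wilsonTerm_three]
  · rw [show Icc 1 n = Ioc 0 n from Icc_add_one_left_eq_Ioc 0 n,
      ← sum_Ioc_consecutive _ (zero_le 4) hn4]
    have head : ∑ k ∈ Ioc 0 4, (wilsonTerm k - if k.Prime then 1 else 0) = 3 / 4 := by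
      norm_num [sum_Ioc_succ_top, -sum_boole, wilsonTerm_one, wilsonTerm_two, wilsonTerm_three,
        wilsonTerm_four]
    have tail_lo := neg_div_le_sum_Ioc_wilsonTerm_sub_indicator le_rfl hn4
    have tail_hi := sum_Ioc_wilsonTerm_sub_indicator_nonpos le_rfl (n := n)
    have : π ^ 2 < 12 := by nlinarith [pi_lt_d2, pi_pos]
    push_cast at tail_lo
    rw [head]
    constructor <;> linarith

theorem stmt_4 (n : ℕ) (hn : 1 < n) :
    ⌊∑ k ∈ Finset.Icc 1 n,
        Real.sin (Real.pi / 2 * (k - 1).factorial / k) ^ 2⌋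
      = (Nat.primeCounting n : ℤ) := by
  obtain ⟨hlo, hhi⟩ := sum_wilsonTerm_sub_primeCounting_mem_Ico hn
  rw [Int.floor_eq_iff]
  push_cast
  constructor <;> unfold wilsonTerm at hlo hhi <;> linarith
end

section
/- For integers m > n > 4, s(m, π/2) − π(m) differs from s(n, π/2) − π(n) by at most (π²/4)·Σ_{n < p ≤ m, p prime} 1/p², in absolute value. -/
noncomputable def s (n : ℕ) (x : ℝ) : ℝ :=
  ∑ k ∈ Finset.Icc 1 n, Real.sin (x * (k - 1).factorial / k) ^ 2

/-!
For a composite `k > 4` we have `2k ∣ (k - 1)!`, so the `k`-th term `sin² (π/2 · (k-1)!/k)` of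
`s(·, π/2)` vanishes. For an odd prime `p`, Wilson's theorem gives `(p - 1)! = p q - 1` with `q`
odd, so the `p`-th term equals `cos² (π/(2p)) = 1 - sin² (π/(2p))`, which lies within
`(π/(2p))²` of `1`. Hence `s(m, π/2) - π(m)` and `s(n, π/2) - π(n)` differ by a sum over the primes
in `(n, m]` of terms of size at most `π²/(4p²)`.
-/

open Nat Real Finset

namespace Nat

theorem mul_dvd_factorial_of_ne {a b n : ℕ} (ha : 0 < a) (hb : 0 < b) (hab : a ≠ b)
    (han : a ≤ n) (hbn : b ≤ n) : a * b ∣ n ! := by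
  calc a * b = ∏ x ∈ {a, b}, x := (prod_pair (f := fun x => x) hab).symm
    _ ∣ ∏ x ∈ Ico 1 (n + 1), x := prod_dvd_prod_of_subset _ _ _ fun x hx => by
      simp only [mem_insert, mem_singleton] at hx
      rw [mem_Ico]
      omega
    _ = n ! := prod_Ico_id_eq_factorial n

theorem dvd_factorial_sub_two_of_not_prime {k : ℕ} (hk : 4 < k) (hp : ¬ k.Prime) :
    k ∣ (k - 2)! := by
  obtain ⟨m, hm⟩ := minFac_dvd k
  have hp2 := (minFac_prime (by omega : k ≠ 1)).two_le
  have hsq := minFac_sq_le_self (by omega) hp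
  generalize k.minFac = p at *
  subst hm
  have hpm : p ≤ m := by
    rw [sq] at hsq
    exact Nat.le_of_mul_le_mul_left hsq (by omega)
  have h2m : 2 * m ≤ p * m := Nat.mul_le_mul_right m hp2
  rcases hpm.lt_or_eq with hpm | rfl
  · have h2p : 2 * p ≤ p * m := by rw [mul_comm p]; exact Nat.mul_le_mul_right p (by omega)
    exact mul_dvd_factorial_of_ne (by omega) (by omega) hpm.ne (by omega) (by omega)
  · -- `k = p ^ 2` with `p ≥ 3`, so `p` and `2 * p` are distinct factors of `(k - 2)!`
    have hp3 : 3 ≤ p := by by_contra! h; interval_cases p; omega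
    have h3p : 3 * p ≤ p * p := Nat.mul_le_mul_right p hp3
    exact (Dvd.intro 2 (by ring)).trans
      (mul_dvd_factorial_of_ne (b := 2 * p) (by omega) (by omega) (by omega) (by omega) (by omega))

theorem two_mul_dvd_factorial_pred_of_not_prime {k : ℕ} (hk : 4 < k) (hp : ¬ k.Prime) :
    2 * k ∣ (k - 1)! := by
  rcases even_or_odd k with ⟨j, rfl⟩ | hodd
  · by_cases hj : j = 4
    · subst hj; decide
    · convert mul_dvd_factorial_of_ne (n := j + j - 1) (a := 4) (b := j) (by omega) (by omega)
        (Ne.symm hj) (by omega) (by omega) using 1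
      ring
  · rw [← mul_factorial_pred (by omega : k - 1 ≠ 0), Nat.sub_sub]
    exact mul_dvd_mul (even_iff_two_dvd.mp (Nat.Odd.sub_odd hodd odd_one))
      (dvd_factorial_sub_two_of_not_prime hk hp)

theorem Prime.exists_odd_factorial_pred_add_one_eq {p : ℕ} (hp : p.Prime) (hp2 : p ≠ 2) :
    ∃ q, Odd q ∧ (p - 1)! + 1 = p * q := by
  have := Fact.mk hp
  obtain ⟨q, hq⟩ : p ∣ (p - 1)! + 1 := by
    rw [← ZMod.natCast_eq_zero_iff]
    push_cast
    rw [ZMod.wilsons_lemma, neg_add_cancel]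
  refine ⟨q, ?_, hq⟩
  have hodd : Odd (p * q) :=
    hq ▸ (even_iff_two_dvd.mpr (Nat.dvd_factorial two_pos (by have := hp.two_le; omega))).add_one
  exact (odd_mul.mp hodd).2

end Nat

theorem Real.sin_sq_odd_mul_pi_div_two_sub {q : ℕ} (hq : Odd q) (y : ℝ) :
    sin (q * (π / 2) - y) ^ 2 = cos y ^ 2 := by
  obtain ⟨r, rfl⟩ := hq
  have : ((2 * r + 1 : ℕ) : ℝ) * (π / 2) - y = (π / 2 - y) + r * π := by push_cast; ring
  rw [this, sin_add_nat_mul_pi, mul_pow, ← pow_mul, mul_comm r, pow_mul, neg_one_sq, one_pow,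
    one_mul, sin_pi_div_two_sub]

theorem sin_sq_pi_div_two_mul_factorial_pred_div_eq_zero {k : ℕ} (hk : 4 < k)
    (hp : ¬ k.Prime) : sin (π / 2 * (k - 1)! / k) ^ 2 = 0 := by
  obtain ⟨t, ht⟩ := two_mul_dvd_factorial_pred_of_not_prime hk hp
  have hk0 : (k : ℝ) ≠ 0 := by positivity
  have : π / 2 * ((k - 1)! : ℝ) / k = t * π := by
    rw [ht]; push_cast; field_simp
  rw [this, sin_nat_mul_pi, sq, mul_zero]

theorem abs_sin_sq_pi_div_two_mul_factorial_pred_div_sub_one_le {p : ℕ} (hp : p.Prime)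
    (hp2 : p ≠ 2) : |sin (π / 2 * (p - 1)! / p) ^ 2 - 1| ≤ π ^ 2 / 4 * (1 / p ^ 2) := by
  obtain ⟨q, hq, hpq⟩ := hp.exists_odd_factorial_pred_add_one_eq hp2
  have hp0 : (p : ℝ) ≠ 0 := by exact_mod_cast hp.ne_zero
  have hangle : π / 2 * ((p - 1)! : ℝ) / p = q * (π / 2) - π / (2 * p) := by
    have : ((p - 1)! : ℝ) = p * q - 1 := by
      rw [eq_sub_iff_add_eq]; exact_mod_cast hpq
    rw [this]; field_simp
  rw [hangle, sin_sq_odd_mul_pi_div_two_sub hq, cos_sq', sub_sub_cancel_left, abs_neg, abs_sq]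
  calc sin (π / (2 * p)) ^ 2 ≤ (π / (2 * p)) ^ 2 := sin_sq_le_sq
    _ = π ^ 2 / 4 * (1 / p ^ 2) := by field_simp; ring

theorem s_sub_primeCounting_eq_sum (n : ℕ) (x : ℝ) :
    s n x - primeCounting n =
      ∑ k ∈ Ioc 0 n, (sin (x * (k - 1)! / k) ^ 2 - if k.Prime then 1 else 0) := by
  rw [s, ← primesLE_card_eq_primeCounting, primesLE_eq_filter_Ioc_zero, card_filter,
    sum_sub_distrib, ← Icc_add_one_left_eq_Ioc]
  push_cast
  rfl

theorem abs_sin_sq_pi_div_two_mul_factorial_pred_div_sub_ite_le {k : ℕ} (hk : 4 < k) :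
    |sin (π / 2 * (k - 1)! / k) ^ 2 - if k.Prime then 1 else 0| ≤
      π ^ 2 / 4 * if k.Prime then 1 / (k : ℝ) ^ 2 else 0 := by
  split_ifs with hp
  · exact abs_sin_sq_pi_div_two_mul_factorial_pred_div_sub_one_le hp (by omega)
  · simp [sin_sq_pi_div_two_mul_factorial_pred_div_eq_zero hk hp]

theorem stmt_6 (n m : ℕ) (hn : 4 < n) (hnm : n < m) :
    |(s m (Real.pi / 2) - Nat.primeCounting m)
        - (s n (Real.pi / 2) - Nat.primeCounting n)|
      ≤ Real.pi ^ 2 / 4 *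
        ∑ p ∈ (Finset.Ioc n m).filter Nat.Prime, (1 : ℝ) / (p : ℝ) ^ 2 := by
  rw [s_sub_primeCounting_eq_sum, s_sub_primeCounting_eq_sum,
    ← sum_Ioc_consecutive _ (zero_le n) hnm.le, add_sub_cancel_left, sum_filter, mul_sum]
  refine (abs_sum_le_sum_abs _ _).trans (sum_le_sum fun k hk => ?_)
  exact abs_sin_sq_pi_div_two_mul_factorial_pred_div_sub_ite_le (by rw [mem_Ioc] at hk; omega)
end

section
/- Let a, b be coprime integers with b > 1, and let p be a prime not dividing b with b | (p-1)!/p (in the valuation sense at all primes dividing b). Let u ∈ {1,...,b-1} be the inverse of p modulo b. Then sin²(πa(p-1)!/(bp)) = sin²(πau/b) + sin(aπ/(bp))·sin(aπ/(bp) − 2auπ/b). -/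
lemma sin_sq_aux (x y : ℝ) :
    Real.sin (x - y) ^ 2 = Real.sin y ^ 2 + Real.sin x * Real.sin (x - 2 * y) := by
  have key : Real.sin x * Real.sin (x - 2 * y)
      = (Real.cos (2 * y) - Real.cos (2 * (x - y))) / 2 := by
    rw [Real.cos_sub_cos, show (2 * y + 2 * (x - y)) / 2 = x by ring,
      show (2 * y - 2 * (x - y)) / 2 = -(x - 2 * y) by ring, Real.sin_neg]
    ring
  rw [Real.sin_sq_eq_half_sub, Real.sin_sq_eq_half_sub, key]
  ring

theorem stmt_9 (a b p u : ℕ) (hab : Nat.Coprime a b) (hb : 1 < b)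
    (hp : p.Prime) (hpb : ¬ p ∣ b)
    (hdiv : ∀ q : ℕ, q.Prime → q ∣ b →
      (padicValNat q b : ℤ) ≤ padicValRat q (((p - 1).factorial : ℚ) / p))
    (hu1 : 1 ≤ u) (hu2 : u ≤ b - 1) (huinv : p * u ≡ 1 [MOD b]) :
    Real.sin (Real.pi * a * (p - 1).factorial / (b * p)) ^ 2
      = Real.sin (Real.pi * a * u / b) ^ 2
        + Real.sin (a * Real.pi / (b * p)) *
          Real.sin (a * Real.pi / (b * p) - 2 * a * u * Real.pi / b) := by
  haveI := Fact.mk hp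
  have hb0 : b ≠ 0 := by omega
  have hp0 : p ≠ 0 := hp.pos.ne'
  have hfact0 : (p - 1).factorial ≠ 0 := Nat.factorial_ne_zero _
  -- b divides (p-1)!
  have hbfact : b ∣ (p - 1).factorial := by
    rw [← Nat.factorization_le_iff_dvd hb0 hfact0, Finsupp.le_def]
    intro q
    by_cases hq : q.Prime
    · by_cases hqb : q ∣ b
      · haveI := Fact.mk hq
        have hqp : q ≠ p := fun h => hpb (h ▸ hqb)
        have hqndvd : ¬ q ∣ p := fun h => hqp ((Nat.prime_dvd_prime_iff_eq hq hp).mp h)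
        have hval : padicValRat q (((p - 1).factorial : ℚ) / p)
            = (padicValNat q (p - 1).factorial : ℤ) := by
          rw [padicValRat.div (by exact_mod_cast hfact0) (by exact_mod_cast hp0),
            padicValRat.of_nat, padicValRat.of_nat,
            padicValNat.eq_zero_of_not_dvd hqndvd]
          simp
        have := hdiv q hq hqb
        rw [hval] at this
        rw [Nat.factorization_def b hq, Nat.factorization_def _ hq]
        exact_mod_cast this
      · simp [Nat.factorization_eq_zero_of_not_dvd hqb]
    · simp [Nat.factorization_eq_zero_of_not_prime _ hq]
  -- the integer N
  set N : ℤ := ((p - 1).factorial : ℤ) + 1 - p * u with hN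
  have hpN : (p : ℤ) ∣ N := by
    have h0 : (N : ZMod p) = 0 := by
      push_cast [hN]
      rw [ZMod.wilsons_lemma]
      simp [ZMod.natCast_self]
    exact_mod_cast (ZMod.intCast_zmod_eq_zero_iff_dvd N p).mp h0
  have hbN : (b : ℤ) ∣ N := by
    have h0 : (N : ZMod b) = 0 := by
      push_cast [hN]
      have h1 : ((p * u : ℕ) : ZMod b) = ((1 : ℕ) : ZMod b) :=
        (ZMod.natCast_eq_natCast_iff _ _ _).mpr huinv
      have h2 : (((p - 1).factorial : ℕ) : ZMod b) = 0 :=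
        (ZMod.natCast_eq_zero_iff _ _).mpr hbfact
      push_cast at h1 h2
      rw [h2, h1]
      ring
    exact_mod_cast (ZMod.intCast_zmod_eq_zero_iff_dvd N b).mp h0
  have hcop : IsCoprime (b : ℤ) (p : ℤ) :=
    Nat.isCoprime_iff_coprime.mpr ((hp.coprime_iff_not_dvd.mpr hpb).symm)
  obtain ⟨k, hk⟩ : ((b : ℤ) * p) ∣ N := hcop.mul_dvd hbN hpN
  -- real computation
  have hbR : (b : ℝ) ≠ 0 := Nat.cast_ne_zero.mpr hb0
  have hpR : (p : ℝ) ≠ 0 := Nat.cast_ne_zero.mpr hp0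
  have hfactR : (((p - 1).factorial : ℕ) : ℝ)
      = (p : ℝ) * u - 1 + (b : ℝ) * p * (k : ℝ) := by
    have : ((p - 1).factorial : ℤ) = (p : ℤ) * u - 1 + (b : ℤ) * p * k := by
      rw [hN] at hk; linarith
    exact_mod_cast congrArg (Int.cast : ℤ → ℝ) this
  have hangle : Real.pi * a * (p - 1).factorial / (b * p)
      = -(a * Real.pi / (b * p) - Real.pi * a * u / b) + ((a : ℤ) * k : ℤ) * Real.pi := by
    rw [hfactR]
    push_cast
    field_simp
    ring
  rw [hangle, Real.sin_add_int_mul_pi, mul_pow]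
  have hsq : ((-1 : ℝ) ^ ((a : ℤ) * k)) ^ 2 = 1 := by
    rw [← zpow_natCast ((-1 : ℝ) ^ ((a : ℤ) * k)) 2, ← zpow_mul]
    rw [mul_comm, zpow_mul]
    norm_num
  rw [hsq, one_mul, Real.sin_neg, neg_sq, sin_sq_aux]
  ring_nf
end

section
/- Let r(k) = (k-1)!/k. The number of quadruples (k₁,k₂,k₃,k₄) ∈ {1,...,n}⁴ together with signs ε_j ∈ {±1} such that ε₁r(k₁) + ε₂r(k₂) + ε₃r(k₃) + ε₄r(k₄) = 0 is O(n²). -/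
def r (k : ℕ) : ℚ := ((k - 1).factorial : ℚ) / k

def signs : Finset ℤ := {-1, 1}

def solutions (n : ℕ) : Finset ((ℕ × ℕ × ℕ × ℕ) × (ℤ × ℤ × ℤ × ℤ)) :=
  ((Finset.Icc 1 n ×ˢ Finset.Icc 1 n ×ˢ Finset.Icc 1 n ×ˢ Finset.Icc 1 n) ×ˢ
      (signs ×ˢ signs ×ˢ signs ×ˢ signs)).filter
    (fun t =>
      (t.2.1 : ℚ) * r t.1.1 + (t.2.2.1 : ℚ) * r t.1.2.1
        + (t.2.2.2.1 : ℚ) * r t.1.2.2.1 + (t.2.2.2.2 : ℚ) * r t.1.2.2.2 = 0)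

lemma r_pos {k : ℕ} (hk : 1 ≤ k) : 0 < r k := by
  unfold r
  positivity

lemma r_succ (m : ℕ) : r (m + 2) = ((m:ℚ) + 1) ^ 2 / ((m:ℚ) + 2) * r (m + 1) := by
  unfold r
  have e : m + 2 - 1 = m + 1 := rfl
  have e2 : m + 1 - 1 = m := rfl
  rw [e, e2, Nat.factorial_succ]
  push_cast
  have h1 : ((m:ℚ) + 1) ≠ 0 := by positivity
  have h2 : ((m:ℚ) + 2) ≠ 0 := by positivity
  field_simp

lemma r_mono_step {k : ℕ} (hk : 2 ≤ k) : r k ≤ r (k + 1) := by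
  obtain ⟨m, rfl⟩ : ∃ m, k = m + 2 := ⟨k - 2, by omega⟩
  show r (m + 2) ≤ r (m + 1 + 2)
  rw [r_succ (m + 1)]
  have hp : 0 < r (m + 2) := r_pos (by omega)
  have hm : (0:ℚ) ≤ (m:ℚ) := Nat.cast_nonneg m
  have h2 : (0:ℚ) < (m:ℚ) + 3 := by positivity
  have e : m + 1 + 1 = m + 2 := rfl
  rw [e]
  push_cast
  rw [← sub_nonneg]
  have heq : ((m:ℚ) + 1 + 1) ^ 2 / ((m:ℚ) + 1 + 2) * r (m + 2) - r (m + 2)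
      = (((m:ℚ)^2 + 3*m + 1) / ((m:ℚ) + 3)) * r (m + 2) := by
    field_simp
    ring
  rw [heq]
  positivity

lemma r_mono {a b : ℕ} (ha : 2 ≤ a) (hab : a ≤ b) : r a ≤ r b := by
  induction b, hab using Nat.le_induction with
  | base => exact le_refl _
  | succ n hn ih => exact le_trans ih (r_mono_step (le_trans ha hn))

lemma r_le_of_le {a b : ℕ} (ha : 1 ≤ a) (hab : a ≤ b) (hb : 4 ≤ b) : r a ≤ r b := by
  rcases Nat.lt_or_ge a 2 with h | h
  · have : a = 1 := by omega
    subst this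
    have h4 : r 4 ≤ r b := r_mono (by norm_num) hb
    have : r 1 ≤ r 4 := by norm_num [r, Nat.factorial]
    linarith
  · exact r_mono h hab

lemma r_lac_step {k : ℕ} (hk : 4 ≤ k) : 3 * r k < r (k + 1) := by
  obtain ⟨m, rfl⟩ : ∃ m, k = m + 2 := ⟨k - 2, by omega⟩
  show 3 * r (m + 2) < r (m + 1 + 2)
  rw [r_succ (m + 1)]
  have hp : 0 < r (m + 2) := r_pos (by omega)
  have hm : (2:ℚ) ≤ (m:ℚ) := by exact_mod_cast (by omega : 2 ≤ m)
  have h2 : (0:ℚ) < (m:ℚ) + 3 := by positivity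
  have e : m + 1 + 1 = m + 2 := rfl
  rw [e]
  push_cast
  rw [← sub_pos]
  have heq : ((m:ℚ) + 1 + 1) ^ 2 / ((m:ℚ) + 1 + 2) * r (m + 2) - 3 * r (m + 2)
      = (((m:ℚ)^2 + m - 5) / ((m:ℚ) + 3)) * r (m + 2) := by
    field_simp
    ring
  rw [heq]
  have hnum : (0:ℚ) < (m:ℚ)^2 + m - 5 := by nlinarith
  positivity

lemma r_lac {a b : ℕ} (ha : 1 ≤ a) (hab : a < b) (hb : 5 ≤ b) : 3 * r a < r b := by
  obtain ⟨c, rfl⟩ : ∃ c, b = c + 1 := ⟨b - 1, by omega⟩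
  have h1 : r a ≤ r c := r_le_of_le ha (by omega) (by omega)
  have h2 : 3 * r c < r (c + 1) := r_lac_step (by omega)
  linarith

lemma r_inj {a b : ℕ} (ha : 1 ≤ a) (hb : 1 ≤ b) (h : r a = r b) : a = b := by
  rcases Nat.lt_trichotomy a b with hlt | he | hlt
  · exfalso
    rcases Nat.lt_or_ge b 5 with h5 | h5
    · have hb4 : b ≤ 4 := by omega
      have ha4 : a ≤ 4 := by omega
      interval_cases a <;> interval_cases b <;> norm_num [r, Nat.factorial] at h
    · have := r_lac ha hlt h5
      have := r_pos ha
      linarith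
  · exact he
  · exfalso
    rcases Nat.lt_or_ge a 5 with h5 | h5
    · have hb4 : b ≤ 4 := by omega
      have ha4 : a ≤ 4 := by omega
      interval_cases b <;> interval_cases a <;> norm_num [r, Nat.factorial] at h
    · have := r_lac hb hlt h5
      have := r_pos hb
      linarith

lemma sign_bound {ε : ℤ} (he : ε = 1 ∨ ε = -1) {x : ℕ} (hx : 1 ≤ x) :
    (ε : ℚ) * r x ≤ r x ∧ -(r x) ≤ (ε : ℚ) * r x := by
  have := r_pos hx
  rcases he with rfl | rfl <;> push_cast <;> constructor <;> linarith

lemma aux1 {M x y z : ℕ} {ε₀ ε₁ ε₂ ε₃ : ℤ} (hM : 5 ≤ M)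
    (hx : 1 ≤ x) (hy : 1 ≤ y) (hz : 1 ≤ z)
    (hxM : x < M) (hyM : y < M) (hzM : z < M)
    (e0 : ε₀ = 1 ∨ ε₀ = -1) (e1 : ε₁ = 1 ∨ ε₁ = -1)
    (e2 : ε₂ = 1 ∨ ε₂ = -1) (e3 : ε₃ = 1 ∨ ε₃ = -1) :
    (ε₀ : ℚ) * r M + (ε₁ : ℚ) * r x + (ε₂ : ℚ) * r y + (ε₃ : ℚ) * r z ≠ 0 := by
  have lx := r_lac hx hxM hM
  have ly := r_lac hy hyM hM
  have lz := r_lac hz hzM hM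
  have bx := sign_bound e1 hx
  have by' := sign_bound e2 hy
  have bz := sign_bound e3 hz
  rcases e0 with rfl | rfl <;> intro h <;> push_cast at h <;>
    [linarith [bx.2, by'.2, bz.2]; linarith [bx.1, by'.1, bz.1]]

lemma aux3 {M x : ℕ} {ε₀ ε₁ ε₂ ε₃ : ℤ} (hM : 5 ≤ M)
    (hx : 1 ≤ x) (hxM : x < M)
    (e0 : ε₀ = 1 ∨ ε₀ = -1) (e1 : ε₁ = 1 ∨ ε₁ = -1)
    (e2 : ε₂ = 1 ∨ ε₂ = -1) (e3 : ε₃ = 1 ∨ ε₃ = -1) :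
    (ε₀ : ℚ) * r M + (ε₁ : ℚ) * r M + (ε₂ : ℚ) * r M + (ε₃ : ℚ) * r x ≠ 0 := by
  have lx := r_lac hx hxM hM
  have hpx := r_pos hx
  have hpM := r_pos (by omega : 1 ≤ M)
  rcases e0 with rfl | rfl <;> rcases e1 with rfl | rfl <;> rcases e2 with rfl | rfl <;>
    rcases e3 with rfl | rfl <;> intro h <;> push_cast at h <;> linarith

lemma aux2same {M x y : ℕ} {ε₀ ε₂ ε₃ : ℤ} (hM : 5 ≤ M)
    (hx : 1 ≤ x) (hy : 1 ≤ y) (hxM : x < M) (hyM : y < M)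
    (e0 : ε₀ = 1 ∨ ε₀ = -1) (e2 : ε₂ = 1 ∨ ε₂ = -1) (e3 : ε₃ = 1 ∨ ε₃ = -1) :
    (ε₀ : ℚ) * r M + (ε₀ : ℚ) * r M + (ε₂ : ℚ) * r x + (ε₃ : ℚ) * r y ≠ 0 := by
  have lx := r_lac hx hxM hM
  have ly := r_lac hy hyM hM
  have hpx := r_pos hx
  have hpy := r_pos hy
  rcases e0 with rfl | rfl <;> rcases e2 with rfl | rfl <;>
    rcases e3 with rfl | rfl <;> intro h <;> push_cast at h <;> linarith

lemma aux2zero {x y : ℕ} {ε₂ ε₃ : ℤ} (hx : 1 ≤ x) (hy : 1 ≤ y)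
    (e2 : ε₂ = 1 ∨ ε₂ = -1) (e3 : ε₃ = 1 ∨ ε₃ = -1)
    (h : (ε₂ : ℚ) * r x + (ε₃ : ℚ) * r y = 0) : x = y := by
  have hpx := r_pos hx
  have hpy := r_pos hy
  rcases e2 with rfl | rfl <;> rcases e3 with rfl | rfl <;> push_cast at h
  · linarith
  · exact r_inj hx hy (by linarith)
  · exact r_inj hx hy (by linarith)
  · linarith

set_option maxHeartbeats 1600000 in
lemma key {k₁ k₂ k₃ k₄ : ℕ} {ε₁ ε₂ ε₃ ε₄ : ℤ}
    (h1 : 1 ≤ k₁) (h2 : 1 ≤ k₂) (h3 : 1 ≤ k₃) (h4 : 1 ≤ k₄)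
    (e1 : ε₁ = 1 ∨ ε₁ = -1) (e2 : ε₂ = 1 ∨ ε₂ = -1)
    (e3 : ε₃ = 1 ∨ ε₃ = -1) (e4 : ε₄ = 1 ∨ ε₄ = -1)
    (heq : (ε₁ : ℚ) * r k₁ + (ε₂ : ℚ) * r k₂ + (ε₃ : ℚ) * r k₃ + (ε₄ : ℚ) * r k₄ = 0) :
    max (max k₁ k₂) (max k₃ k₄) ≤ 4 ∨
      ((k₁ = max (max k₁ k₂) (max k₃ k₄) ∨ k₁ = min (min k₁ k₂) (min k₃ k₄)) ∧
       (k₂ = max (max k₁ k₂) (max k₃ k₄) ∨ k₂ = min (min k₁ k₂) (min k₃ k₄)) ∧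
       (k₃ = max (max k₁ k₂) (max k₃ k₄) ∨ k₃ = min (min k₁ k₂) (min k₃ k₄)) ∧
       (k₄ = max (max k₁ k₂) (max k₃ k₄) ∨ k₄ = min (min k₁ k₂) (min k₃ k₄))) := by
  set M := max (max k₁ k₂) (max k₃ k₄) with hM
  set A := min (min k₁ k₂) (min k₃ k₄) with hA
  rcases le_or_gt M 4 with hM4 | hM4
  · exact Or.inl hM4
  have hM5 : 5 ≤ M := hM4
  right
  have u1 : k₁ ≤ M := by omega
  have u2 : k₂ ≤ M := by omega
  have u3 : k₃ ≤ M := by omega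
  have u4 : k₄ ≤ M := by omega
  by_cases c1 : k₁ = M <;> by_cases c2 : k₂ = M <;> by_cases c3 : k₃ = M <;>
    by_cases c4 : k₄ = M
  -- TTTT
  · exact ⟨Or.inl c1, Or.inl c2, Or.inl c3, Or.inl c4⟩
  -- TTTF
  · have l4 : k₄ < M := lt_of_le_of_ne u4 c4
    rw [c1, c2, c3] at heq
    exact absurd heq (aux3 hM5 h4 l4 e1 e2 e3 e4)
  -- TTFT
  · have l3 : k₃ < M := lt_of_le_of_ne u3 c3
    rw [c1, c2, c4] at heq
    exact absurd (by linarith :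
      (ε₁:ℚ) * r M + (ε₂:ℚ) * r M + (ε₄:ℚ) * r M + (ε₃:ℚ) * r k₃ = 0)
      (aux3 hM5 h3 l3 e1 e2 e4 e3)
  -- TTFF
  · have l3 : k₃ < M := lt_of_le_of_ne u3 c3
    have l4 : k₄ < M := lt_of_le_of_ne u4 c4
    rw [c1, c2] at heq
    by_cases hss : ε₁ = ε₂
    · rw [hss] at heq
      exact absurd (by linarith :
        (ε₂:ℚ) * r M + (ε₂:ℚ) * r M + (ε₃:ℚ) * r k₃ + (ε₄:ℚ) * r k₄ = 0)
        (aux2same hM5 h3 h4 l3 l4 e2 e3 e4)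
    · have hz : (ε₁:ℚ) + ε₂ = 0 := by
        rcases e1 with rfl | rfl <;> rcases e2 with rfl | rfl <;>
          first | exact absurd rfl hss | norm_num
      have hzz : ((ε₁:ℚ) + ε₂) * r M = 0 := by rw [hz, zero_mul]
      have h0 : (ε₃:ℚ) * r k₃ + (ε₄:ℚ) * r k₄ = 0 := by linarith [heq, hzz]
      have hxy : k₃ = k₄ := aux2zero h3 h4 e3 e4 h0
      have hA3 : k₃ = A := by omega
      exact ⟨Or.inl c1, Or.inl c2, Or.inr hA3, Or.inr (hxy ▸ hA3)⟩
  -- TFTT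
  · have l2 : k₂ < M := lt_of_le_of_ne u2 c2
    rw [c1, c3, c4] at heq
    exact absurd (by linarith :
      (ε₁:ℚ) * r M + (ε₃:ℚ) * r M + (ε₄:ℚ) * r M + (ε₂:ℚ) * r k₂ = 0)
      (aux3 hM5 h2 l2 e1 e3 e4 e2)
  -- TFTF
  · have l2 : k₂ < M := lt_of_le_of_ne u2 c2
    have l4 : k₄ < M := lt_of_le_of_ne u4 c4
    rw [c1, c3] at heq
    by_cases hss : ε₁ = ε₃
    · rw [hss] at heq
      exact absurd (by linarith :
        (ε₃:ℚ) * r M + (ε₃:ℚ) * r M + (ε₂:ℚ) * r k₂ + (ε₄:ℚ) * r k₄ = 0)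
        (aux2same hM5 h2 h4 l2 l4 e3 e2 e4)
    · have hz : (ε₁:ℚ) + ε₃ = 0 := by
        rcases e1 with rfl | rfl <;> rcases e3 with rfl | rfl <;>
          first | exact absurd rfl hss | norm_num
      have hzz : ((ε₁:ℚ) + ε₃) * r M = 0 := by rw [hz, zero_mul]
      have h0 : (ε₂:ℚ) * r k₂ + (ε₄:ℚ) * r k₄ = 0 := by linarith [heq, hzz]
      have hxy : k₂ = k₄ := aux2zero h2 h4 e2 e4 h0
      have hA2 : k₂ = A := by omega
      exact ⟨Or.inl c1, Or.inr hA2, Or.inl c3, Or.inr (hxy ▸ hA2)⟩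
  -- TFFT
  · have l2 : k₂ < M := lt_of_le_of_ne u2 c2
    have l3 : k₃ < M := lt_of_le_of_ne u3 c3
    rw [c1, c4] at heq
    by_cases hss : ε₁ = ε₄
    · rw [hss] at heq
      exact absurd (by linarith :
        (ε₄:ℚ) * r M + (ε₄:ℚ) * r M + (ε₂:ℚ) * r k₂ + (ε₃:ℚ) * r k₃ = 0)
        (aux2same hM5 h2 h3 l2 l3 e4 e2 e3)
    · have hz : (ε₁:ℚ) + ε₄ = 0 := by
        rcases e1 with rfl | rfl <;> rcases e4 with rfl | rfl <;>
          first | exact absurd rfl hss | norm_num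
      have hzz : ((ε₁:ℚ) + ε₄) * r M = 0 := by rw [hz, zero_mul]
      have h0 : (ε₂:ℚ) * r k₂ + (ε₃:ℚ) * r k₃ = 0 := by linarith [heq, hzz]
      have hxy : k₂ = k₃ := aux2zero h2 h3 e2 e3 h0
      have hA2 : k₂ = A := by omega
      exact ⟨Or.inl c1, Or.inr hA2, Or.inr (hxy ▸ hA2), Or.inl c4⟩
  -- TFFF
  · have l2 : k₂ < M := lt_of_le_of_ne u2 c2
    have l3 : k₃ < M := lt_of_le_of_ne u3 c3
    have l4 : k₄ < M := lt_of_le_of_ne u4 c4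
    rw [c1] at heq
    exact absurd heq (aux1 hM5 h2 h3 h4 l2 l3 l4 e1 e2 e3 e4)
  -- FTTT
  · have l1 : k₁ < M := lt_of_le_of_ne u1 c1
    rw [c2, c3, c4] at heq
    exact absurd (by linarith :
      (ε₂:ℚ) * r M + (ε₃:ℚ) * r M + (ε₄:ℚ) * r M + (ε₁:ℚ) * r k₁ = 0)
      (aux3 hM5 h1 l1 e2 e3 e4 e1)
  -- FTTF
  · have l1 : k₁ < M := lt_of_le_of_ne u1 c1
    have l4 : k₄ < M := lt_of_le_of_ne u4 c4
    rw [c2, c3] at heq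
    by_cases hss : ε₂ = ε₃
    · rw [hss] at heq
      exact absurd (by linarith :
        (ε₃:ℚ) * r M + (ε₃:ℚ) * r M + (ε₁:ℚ) * r k₁ + (ε₄:ℚ) * r k₄ = 0)
        (aux2same hM5 h1 h4 l1 l4 e3 e1 e4)
    · have hz : (ε₂:ℚ) + ε₃ = 0 := by
        rcases e2 with rfl | rfl <;> rcases e3 with rfl | rfl <;>
          first | exact absurd rfl hss | norm_num
      have hzz : ((ε₂:ℚ) + ε₃) * r M = 0 := by rw [hz, zero_mul]
      have h0 : (ε₁:ℚ) * r k₁ + (ε₄:ℚ) * r k₄ = 0 := by linarith [heq, hzz]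
      have hxy : k₁ = k₄ := aux2zero h1 h4 e1 e4 h0
      have hA1 : k₁ = A := by omega
      exact ⟨Or.inr hA1, Or.inl c2, Or.inl c3, Or.inr (hxy ▸ hA1)⟩
  -- FTFT
  · have l1 : k₁ < M := lt_of_le_of_ne u1 c1
    have l3 : k₃ < M := lt_of_le_of_ne u3 c3
    rw [c2, c4] at heq
    by_cases hss : ε₂ = ε₄
    · rw [hss] at heq
      exact absurd (by linarith :
        (ε₄:ℚ) * r M + (ε₄:ℚ) * r M + (ε₁:ℚ) * r k₁ + (ε₃:ℚ) * r k₃ = 0)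
        (aux2same hM5 h1 h3 l1 l3 e4 e1 e3)
    · have hz : (ε₂:ℚ) + ε₄ = 0 := by
        rcases e2 with rfl | rfl <;> rcases e4 with rfl | rfl <;>
          first | exact absurd rfl hss | norm_num
      have hzz : ((ε₂:ℚ) + ε₄) * r M = 0 := by rw [hz, zero_mul]
      have h0 : (ε₁:ℚ) * r k₁ + (ε₃:ℚ) * r k₃ = 0 := by linarith [heq, hzz]
      have hxy : k₁ = k₃ := aux2zero h1 h3 e1 e3 h0
      have hA1 : k₁ = A := by omega
      exact ⟨Or.inr hA1, Or.inl c2, Or.inr (hxy ▸ hA1), Or.inl c4⟩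
  -- FTFF
  · have l1 : k₁ < M := lt_of_le_of_ne u1 c1
    have l3 : k₃ < M := lt_of_le_of_ne u3 c3
    have l4 : k₄ < M := lt_of_le_of_ne u4 c4
    rw [c2] at heq
    exact absurd (by linarith :
      (ε₂:ℚ) * r M + (ε₁:ℚ) * r k₁ + (ε₃:ℚ) * r k₃ + (ε₄:ℚ) * r k₄ = 0)
      (aux1 hM5 h1 h3 h4 l1 l3 l4 e2 e1 e3 e4)
  -- FFTT
  · have l1 : k₁ < M := lt_of_le_of_ne u1 c1
    have l2 : k₂ < M := lt_of_le_of_ne u2 c2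
    rw [c3, c4] at heq
    by_cases hss : ε₃ = ε₄
    · rw [hss] at heq
      exact absurd (by linarith :
        (ε₄:ℚ) * r M + (ε₄:ℚ) * r M + (ε₁:ℚ) * r k₁ + (ε₂:ℚ) * r k₂ = 0)
        (aux2same hM5 h1 h2 l1 l2 e4 e1 e2)
    · have hz : (ε₃:ℚ) + ε₄ = 0 := by
        rcases e3 with rfl | rfl <;> rcases e4 with rfl | rfl <;>
          first | exact absurd rfl hss | norm_num
      have hzz : ((ε₃:ℚ) + ε₄) * r M = 0 := by rw [hz, zero_mul]
      have h0 : (ε₁:ℚ) * r k₁ + (ε₂:ℚ) * r k₂ = 0 := by linarith [heq, hzz]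
      have hxy : k₁ = k₂ := aux2zero h1 h2 e1 e2 h0
      have hA1 : k₁ = A := by omega
      exact ⟨Or.inr hA1, Or.inr (hxy ▸ hA1), Or.inl c3, Or.inl c4⟩
  -- FFTF
  · have l1 : k₁ < M := lt_of_le_of_ne u1 c1
    have l2 : k₂ < M := lt_of_le_of_ne u2 c2
    have l4 : k₄ < M := lt_of_le_of_ne u4 c4
    rw [c3] at heq
    exact absurd (by linarith :
      (ε₃:ℚ) * r M + (ε₁:ℚ) * r k₁ + (ε₂:ℚ) * r k₂ + (ε₄:ℚ) * r k₄ = 0)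
      (aux1 hM5 h1 h2 h4 l1 l2 l4 e3 e1 e2 e4)
  -- FFFT
  · have l1 : k₁ < M := lt_of_le_of_ne u1 c1
    have l2 : k₂ < M := lt_of_le_of_ne u2 c2
    have l3 : k₃ < M := lt_of_le_of_ne u3 c3
    rw [c4] at heq
    exact absurd (by linarith :
      (ε₄:ℚ) * r M + (ε₁:ℚ) * r k₁ + (ε₂:ℚ) * r k₂ + (ε₃:ℚ) * r k₃ = 0)
      (aux1 hM5 h1 h2 h3 l1 l2 l3 e4 e1 e2 e3)
  -- FFFF
  · exfalso
    have : M = k₁ ∨ M = k₂ ∨ M = k₃ ∨ M = k₄ := by omega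
    rcases this with h | h | h | h
    exacts [c1 h.symm, c2 h.symm, c3 h.symm, c4 h.symm]

set_option maxHeartbeats 1600000 in
theorem stmt_13 : ∃ C : ℕ, ∀ n : ℕ, (solutions n).card ≤ C * n ^ 2 := by
  classical
  refine ⟨20736, fun n => ?_⟩
  have hmain : (solutions n).card ≤ 20736 * (Finset.Icc 1 n ×ˢ Finset.Icc 1 n).card := by
    refine Finset.card_le_mul_card_image_of_maps_to
      (f := fun t : ((ℕ × ℕ × ℕ × ℕ) × (ℤ × ℤ × ℤ × ℤ)) =>
        (max (max t.1.1 t.1.2.1) (max t.1.2.2.1 t.1.2.2.2),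
         min (min t.1.1 t.1.2.1) (min t.1.2.2.1 t.1.2.2.2)))
      (t := Finset.Icc 1 n ×ˢ Finset.Icc 1 n) ?_ 20736 ?_
    · rintro ⟨⟨k1, k2, k3, k4⟩, s1, s2, s3, s4⟩ ha
      simp only [solutions, Finset.mem_filter, Finset.mem_product, Finset.mem_Icc] at ha
      obtain ⟨⟨⟨hb1, hb2, hb3, hb4⟩, _⟩, _⟩ := ha
      simp only [Finset.mem_product, Finset.mem_Icc]
      constructor <;> constructor <;> omega
    · rintro ⟨M₀, A₀⟩ hb
      have hsub : ((solutions n).filter fun a =>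
            (max (max a.1.1 a.1.2.1) (max a.1.2.2.1 a.1.2.2.2),
             min (min a.1.1 a.1.2.1) (min a.1.2.2.1 a.1.2.2.2)) = (M₀, A₀)) ⊆
          (({M₀, A₀, 1, 2, 3, 4} : Finset ℕ) ×ˢ ({M₀, A₀, 1, 2, 3, 4} : Finset ℕ) ×ˢ
            ({M₀, A₀, 1, 2, 3, 4} : Finset ℕ) ×ˢ ({M₀, A₀, 1, 2, 3, 4} : Finset ℕ)) ×ˢ
          (signs ×ˢ signs ×ˢ signs ×ˢ signs) := by
        rintro ⟨⟨k1, k2, k3, k4⟩, s1, s2, s3, s4⟩ ha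
        simp only [solutions, Finset.mem_filter, Finset.mem_product, Finset.mem_Icc,
          Prod.mk.injEq] at ha
        obtain ⟨⟨⟨⟨hb1, hb2, hb3, hb4⟩, hs1, hs2, hs3, hs4⟩, heq⟩, hMe, hAe⟩ := ha
        have e1 : s1 = 1 ∨ s1 = -1 := by have := hs1; simp [signs] at this; tauto
        have e2 : s2 = 1 ∨ s2 = -1 := by have := hs2; simp [signs] at this; tauto
        have e3 : s3 = 1 ∨ s3 = -1 := by have := hs3; simp [signs] at this; tauto
        have e4 : s4 = 1 ∨ s4 = -1 := by have := hs4; simp [signs] at this; tauto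
        have hkey := key hb1.1 hb2.1 hb3.1 hb4.1 e1 e2 e3 e4 heq
        simp only [Finset.mem_product, Finset.mem_insert, Finset.mem_singleton]
        exact ⟨⟨by omega, by omega, by omega, by omega⟩, hs1, hs2, hs3, hs4⟩
      refine le_trans (Finset.card_le_card hsub) ?_
      rw [Finset.card_product, Finset.card_product, Finset.card_product,
        Finset.card_product, Finset.card_product, Finset.card_product]
      have h6 : ({M₀, A₀, 1, 2, 3, 4} : Finset ℕ).card ≤ 6 := by
        refine le_trans (Finset.card_insert_le _ _) ?_
        refine Nat.succ_le_succ ?_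
        refine le_trans (Finset.card_insert_le _ _) ?_
        refine Nat.succ_le_succ ?_
        refine le_trans (Finset.card_insert_le _ _) ?_
        refine Nat.succ_le_succ ?_
        refine le_trans (Finset.card_insert_le _ _) ?_
        refine Nat.succ_le_succ ?_
        refine le_trans (Finset.card_insert_le _ _) ?_
        simp
      have hs2 : (signs.card) = 2 := rfl
      rw [hs2]
      calc ({M₀, A₀, 1, 2, 3, 4} : Finset ℕ).card *
            (({M₀, A₀, 1, 2, 3, 4} : Finset ℕ).card *
              (({M₀, A₀, 1, 2, 3, 4} : Finset ℕ).card *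
                ({M₀, A₀, 1, 2, 3, 4} : Finset ℕ).card)) * (2 * (2 * (2 * 2)))
          ≤ 6 * (6 * (6 * 6)) * (2 * (2 * (2 * 2))) := by
            exact Nat.mul_le_mul_right _
              (Nat.mul_le_mul h6 (Nat.mul_le_mul h6 (Nat.mul_le_mul h6 h6)))
        _ = 20736 := by norm_num
  rw [Finset.card_product, Nat.card_Icc] at hmain
  calc (solutions n).card ≤ 20736 * ((n + 1 - 1) * (n + 1 - 1)) := hmain
    _ = 20736 * n ^ 2 := by rw [Nat.add_sub_cancel]; ring
end

section
/- For almost every x ∈ ℝ (Lebesgue), s(n,x)/n → 1/2 as n → ∞, where s(n,x) = Σ_{k=1}^n sin²(x(k-1)!/k). -/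
open Real Filter MeasureTheory Finset Topology
open scoped Nat

theorem tendsto_sum_range_div_of_tendsto_sq_div {a : ℕ → ℝ} (ha : ∀ k, |a k| ≤ 1)
    (h : Tendsto (fun m : ℕ => (∑ k ∈ range (m ^ 2), a k) / (m ^ 2 : ℕ)) atTop (𝓝 0)) :
    Tendsto (fun n : ℕ => (∑ k ∈ range n, a k) / n) atTop (𝓝 0) := by
  set A : ℕ → ℝ := fun n => ∑ k ∈ range n, a k
  have hsqrt : Tendsto Nat.sqrt atTop atTop :=
    tendsto_atTop_atTop.2 fun b => ⟨b * b, fun n hn => Nat.le_sqrt.2 hn⟩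
  have hmajor : Tendsto (fun m : ℕ => |A (m ^ 2) / (m ^ 2 : ℕ)| + 2 / (m : ℝ)) atTop (𝓝 0) := by
    simpa using h.abs.add (tendsto_const_div_atTop_nhds_zero_nat 2)
  refine squeeze_zero_norm' ?_ (hmajor.comp hsqrt)
  filter_upwards [eventually_ge_atTop 1] with n hn
  set m := Nat.sqrt n
  have hm : 0 < m := Nat.sqrt_pos.2 hn
  have hmn : m ^ 2 ≤ n := Nat.sqrt_le' n
  have hgap : |A n - A (m ^ 2)| ≤ 2 * m := by
    calc |A n - A (m ^ 2)| = |∑ k ∈ Ico (m ^ 2) n, a k| := by rw [sum_Ico_eq_sub _ hmn]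
      _ ≤ ∑ k ∈ Ico (m ^ 2) n, 1 := abs_sum_le_sum_abs _ _ |>.trans (sum_le_sum fun k _ => ha k)
      _ ≤ 2 * m := by
        have hle : n ≤ m * m + m + m := Nat.sqrt_le_add n
        simp only [sum_const, Nat.card_Ico, nsmul_eq_mul, mul_one]
        exact_mod_cast (by rw [sq]; omega : n - m ^ 2 ≤ 2 * m)
  have hmR : (0 : ℝ) < m := by exact_mod_cast hm
  have hmnR : ((m ^ 2 : ℕ) : ℝ) ≤ n := by exact_mod_cast hmn
  have hpos : (0 : ℝ) < (m ^ 2 : ℕ) := by positivity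
  calc ‖A n / n‖ = |A n| / n := by rw [norm_div, Real.norm_eq_abs, Real.norm_natCast]
    _ ≤ (|A (m ^ 2)| + 2 * m) / (m ^ 2 : ℕ) := by
        gcongr
        linarith [abs_sub_abs_le_abs_sub (A n) (A (m ^ 2))]
    _ = |A (m ^ 2) / (m ^ 2 : ℕ)| + 2 / m := by
        rw [abs_div, abs_of_pos hpos, add_div]
        push_cast
        field_simp

theorem ae_tendsto_zero_of_summable_integral_norm {Ω : Type*} [MeasurableSpace Ω] {μ : Measure Ω}
    {g : ℕ → Ω → ℝ} (hg : ∀ n, Integrable (g n) μ)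
    (hsum : Summable fun n => ∫ x, ‖g n x‖ ∂μ) :
    ∀ᵐ x ∂μ, Tendsto (fun n => g n x) atTop (𝓝 0) := by
  have htsum : ∑' n, eLpNorm (g n) 1 μ ≠ ⊤ := by
    simp_rw [eLpNorm_one_eq_lintegral_enorm, ← ofReal_integral_norm_eq_lintegral_enorm (hg _)]
    rw [← ENNReal.ofReal_tsum_of_nonneg (fun n => integral_nonneg fun x => norm_nonneg _) hsum]
    exact ENNReal.ofReal_ne_top
  filter_upwards [summable_norm_of_tsum_eLpNorm_ne_top le_rfl (fun n => (hg n).1) htsum] with x hx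
  exact tendsto_zero_iff_norm_tendsto_zero.2 hx.tendsto_atTop_zero

theorem ae_tendsto_sum_range_div_of_integral_sq_le {Ω : Type*} [MeasurableSpace Ω]
    {μ : Measure Ω} [IsFiniteMeasure μ] {f : ℕ → Ω → ℝ} (hf : ∀ k, AEStronglyMeasurable (f k) μ)
    (hb : ∀ k x, |f k x| ≤ 1) {C : ℝ} (hC : ∀ n, ∫ x, (∑ k ∈ range n, f k x) ^ 2 ∂μ ≤ C * n) :
    ∀ᵐ x ∂μ, Tendsto (fun n : ℕ => (∑ k ∈ range n, f k x) / n) atTop (𝓝 0) := by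
  set A : ℕ → Ω → ℝ := fun n x => ∑ k ∈ range n, f k x
  have hA_sq_int : ∀ n, Integrable (fun x => A n x ^ 2) μ := fun n => by
    refine .of_bound ((Finset.aestronglyMeasurable_fun_sum _ fun k _ => hf k).pow 2) ((n : ℝ) ^ 2)
      (.of_forall fun x => ?_)
    have : |A n x| ≤ n :=
      (abs_sum_le_sum_abs _ _).trans ((sum_le_sum fun k _ => hb k x).trans (by simp))
    simpa [Real.norm_eq_abs, sq_abs] using pow_le_pow_left₀ (abs_nonneg _) this 2
  set g : ℕ → Ω → ℝ := fun m x => (A (m ^ 2) x / (m ^ 2 : ℕ)) ^ 2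
  have hg_int : ∀ m, Integrable (g m) μ := fun m => by
    simpa only [g, div_pow] using (hA_sq_int (m ^ 2)).div_const _
  have hg_le : ∀ m : ℕ, ∫ x, ‖g m x‖ ∂μ ≤ C / (m : ℝ) ^ 2 := fun m => by
    rcases Nat.eq_zero_or_pos m with rfl | hm
    · simp [g]
    have hm' : (0 : ℝ) < m := by exact_mod_cast hm
    calc ∫ x, ‖g m x‖ ∂μ = (∫ x, A (m ^ 2) x ^ 2 ∂μ) / ((m : ℝ) ^ 2) ^ 2 := by
          rw [← integral_div]
          refine integral_congr_ae (.of_forall fun x => ?_)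
          simp only [g]
          rw [Real.norm_of_nonneg (sq_nonneg _), div_pow, Nat.cast_pow]
      _ ≤ C * (m : ℝ) ^ 2 / ((m : ℝ) ^ 2) ^ 2 := by
          gcongr; exact_mod_cast hC (m ^ 2)
      _ = C / (m : ℝ) ^ 2 := by field_simp
  have hsum : Summable fun m => ∫ x, ‖g m x‖ ∂μ :=
    .of_nonneg_of_le (fun m => integral_nonneg fun x => norm_nonneg _) hg_le
      ((summable_one_div_nat_pow.2 one_lt_two).mul_left C |>.congr fun m => by ring)
  filter_upwards [ae_tendsto_zero_of_summable_integral_norm hg_int hsum] with x hx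
  refine tendsto_sum_range_div_of_tendsto_sq_div (fun k => hb k x) ?_
  have := hx.sqrt
  simp only [g, Real.sqrt_sq_eq_abs, Real.sqrt_zero] at this
  exact (tendsto_zero_iff_abs_tendsto_zero _).2 this

theorem abs_intervalIntegral_cos_mul_le {c : ℝ} (hc : c ≠ 0) (a b : ℝ) :
    |∫ x in a..b, cos (c * x)| ≤ 2 / |c| := by
  rw [intervalIntegral.integral_comp_mul_left cos hc, integral_cos, smul_eq_mul, abs_mul,
    abs_inv, inv_mul_eq_div]
  gcongr
  exact (abs_sub _ _).trans (by linarith [abs_sin_le_one (c * b), abs_sin_le_one (c * a)])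

theorem abs_intervalIntegral_cos_mul_mul_cos_mul_le {p q : ℝ} (hsub : p - q ≠ 0)
    (hadd : p + q ≠ 0) (a b : ℝ) :
    |∫ x in a..b, cos (p * x) * cos (q * x)| ≤ 1 / |p - q| + 1 / |p + q| := by
  have hprod : ∀ x, cos (p * x) * cos (q * x) = (cos ((p - q) * x) + cos ((p + q) * x)) / 2 :=
    fun x => by rw [sub_mul, add_mul, ← two_mul_cos_mul_cos]; ring
  have hint : ∀ r : ℝ, IntervalIntegrable (fun x => cos (r * x)) volume a b := fun r =>
    (continuous_cos.comp (continuous_const_mul r)).intervalIntegrable a b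
  simp_rw [hprod, intervalIntegral.integral_div, intervalIntegral.integral_add (hint _) (hint _)]
  rw [abs_div, abs_two]
  calc |(∫ x in a..b, cos ((p - q) * x)) + ∫ x in a..b, cos ((p + q) * x)| / 2
      ≤ (2 / |p - q| + 2 / |p + q|) / 2 := by
        gcongr
        exact (abs_add_le _ _).trans (add_le_add (abs_intervalIntegral_cos_mul_le hsub a b)
          (abs_intervalIntegral_cos_mul_le hadd a b))
    _ = 1 / |p - q| + 1 / |p + q| := by ring

variable {ω : ℕ → ℝ} {c : ℝ}

theorem intervalIntegral_cos_mul_mul_cos_mul_le (hpos : ∀ k, 0 < ω k)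
    (hsep : ∀ j k, j ≠ k → ω k ≤ c * |ω j - ω k|) (hc : 0 ≤ c) {a b : ℝ} (hab : a ≤ b)
    (j k : ℕ) :
    ∫ x in a..b, cos (ω j * x) * cos (ω k * x) ≤
      (if j = k then b - a else 0) + (1 / ω j + c * (1 / ω k)) := by
  have hj := hpos j
  have hk := hpos k
  split_ifs with hjk
  · have hbound : ∫ x in a..b, cos (ω j * x) * cos (ω k * x) ≤ b - a := by
      have := intervalIntegral.norm_integral_le_of_norm_le_const (a := a) (b := b) (C := 1)
        (f := fun x => cos (ω j * x) * cos (ω k * x)) fun x _ => by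
          rw [norm_mul]
          exact mul_le_one₀ (abs_cos_le_one _) (norm_nonneg _) (abs_cos_le_one _)
      rw [one_mul, abs_of_nonneg (sub_nonneg.2 hab)] at this
      exact (le_abs_self _).trans this
    have : 0 ≤ 1 / ω j + c * (1 / ω k) := by positivity
    linarith
  · have hsep' := hsep j k hjk
    have hne : ω j - ω k ≠ 0 := fun h0 => by
      rw [h0, abs_zero, mul_zero] at hsep'
      linarith
    have hΔ := abs_pos.2 hne
    have hdiff : 1 / |ω j - ω k| ≤ c * (1 / ω k) := by
      rw [div_le_iff₀ hΔ]; field_simp; linarith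
    have hsum : 1 / |ω j + ω k| ≤ 1 / ω j := by
      rw [abs_of_pos (by linarith)]; gcongr; linarith
    have := abs_intervalIntegral_cos_mul_mul_cos_mul_le hne (by linarith) a b
    linarith [le_abs_self (∫ x in a..b, cos (ω j * x) * cos (ω k * x))]

theorem intervalIntegral_sq_sum_cos_le (hpos : ∀ k, 0 < ω k)
    (hsep : ∀ j k, j ≠ k → ω k ≤ c * |ω j - ω k|) (hsum : Summable fun k => 1 / ω k)
    {a b : ℝ} (hab : a ≤ b) (n : ℕ) :
    ∫ x in a..b, (∑ k ∈ range n, cos (ω k * x)) ^ 2 ≤ (b - a + (c + 1) * ∑' k, 1 / ω k) * n := by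
  have hc : 0 ≤ c := by
    have := hsep 0 1 zero_ne_one
    nlinarith [hpos 1, abs_nonneg (ω 0 - ω 1)]
  have hint : ∀ j k, IntervalIntegrable (fun x => cos (ω j * x) * cos (ω k * x)) volume a b :=
    fun j k => (by fun_prop : Continuous _).intervalIntegrable a b
  have hpartial : ∑ k ∈ range n, 1 / ω k ≤ ∑' k, 1 / ω k :=
    hsum.sum_le_tsum _ fun k _ => (one_div_pos.2 (hpos k)).le
  calc ∫ x in a..b, (∑ k ∈ range n, cos (ω k * x)) ^ 2
      = ∑ j ∈ range n, ∑ k ∈ range n, ∫ x in a..b, cos (ω j * x) * cos (ω k * x) := by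
        simp_rw [sq, sum_mul_sum]
        rw [intervalIntegral.integral_finsetSum fun j _ => (by fun_prop : Continuous fun x =>
          ∑ k ∈ range n, cos (ω j * x) * cos (ω k * x)).intervalIntegrable a b]
        exact sum_congr rfl fun j _ => intervalIntegral.integral_finsetSum fun k _ => hint j k
    _ ≤ ∑ j ∈ range n, ∑ k ∈ range n,
          ((if j = k then b - a else 0) + (1 / ω j + c * (1 / ω k))) :=
        sum_le_sum fun j _ => sum_le_sum fun k _ =>
          intervalIntegral_cos_mul_mul_cos_mul_le hpos hsep hc hab j k
    _ = (b - a + (c + 1) * ∑ k ∈ range n, 1 / ω k) * n := by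
        simp only [sum_add_distrib, sum_ite_eq, sum_ite_mem, inter_self, ← mul_sum, sum_const,
          card_range, nsmul_eq_mul]
        ring
    _ ≤ (b - a + (c + 1) * ∑' k, 1 / ω k) * n := by gcongr

theorem ae_tendsto_sum_cos_div (hpos : ∀ k, 0 < ω k)
    (hsep : ∀ j k, j ≠ k → ω k ≤ c * |ω j - ω k|) (hsum : Summable fun k => 1 / ω k) :
    ∀ᵐ x, Tendsto (fun n : ℕ => (∑ k ∈ range n, cos (ω k * x)) / n) atTop (𝓝 0) := by
  have hcover : ∀ᵐ x ∂volume.restrict (⋃ m : ℤ, Set.Ioc (m : ℝ) (m + 1)),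
      Tendsto (fun n : ℕ => (∑ k ∈ range n, cos (ω k * x)) / n) atTop (𝓝 0) := by
    refine (ae_restrict_iUnion_iff _ _).2 fun m => ?_
    refine ae_tendsto_sum_range_div_of_integral_sq_le (C := 1 + (c + 1) * ∑' k, 1 / ω k)
      (fun k => by fun_prop) (fun k x => abs_cos_le_one _) fun n => ?_
    rw [← intervalIntegral.integral_of_le (by linarith)]
    simpa using
      intervalIntegral_sq_sum_cos_le hpos hsep hsum (a := m) (b := m + 1) (by linarith) n
  rwa [iUnion_Ioc_intCast, Measure.restrict_univ] at hcover

/-- The frequency `2 (k - 1)! / k` of the `k`-th summand of `s`, reindexed from `0`. -/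
noncomputable def factorialFreq (k : ℕ) : ℝ := 2 * k ! / (k + 1)

theorem factorialFreq_pos (k : ℕ) : 0 < factorialFreq k := by
  unfold factorialFreq; positivity

theorem factorialFreq_succ (k : ℕ) :
    factorialFreq (k + 1) = (k + 1) ^ 2 / (k + 2) * factorialFreq k := by
  unfold factorialFreq
  rw [Nat.factorial_succ]
  push_cast
  field_simp
  ring

theorem factorialFreq_le_succ {k : ℕ} (hk : 2 ≤ k) :
    factorialFreq k ≤ 2 / 3 * factorialFreq (k + 1) := by
  have hk' : (2 : ℝ) ≤ k := by exact_mod_cast hk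
  have hratio : 3 / 2 ≤ ((k : ℝ) + 1) ^ 2 / (k + 2) := by
    rw [le_div_iff₀ (by positivity)]; nlinarith
  rw [factorialFreq_succ]
  nlinarith [factorialFreq_pos k]

theorem factorialFreq_le_of_lt {j k : ℕ} (hk : 3 ≤ k) (hjk : j < k) :
    factorialFreq j ≤ 2 / 3 * factorialFreq k := by
  induction k, hk using Nat.le_induction generalizing j with
  | base => interval_cases j <;> norm_num [factorialFreq, Nat.factorial]
  | succ k hk ih =>
    have hstep := factorialFreq_le_succ (by omega : 2 ≤ k)
    rcases Nat.lt_succ_iff_lt_or_eq.1 hjk with hj | rfl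
    · nlinarith [ih hj, factorialFreq_pos k]
    · exact hstep

theorem factorialFreq_le_abs_sub {j k : ℕ} (hjk : j ≠ k) :
    factorialFreq k ≤ 4 * |factorialFreq j - factorialFreq k| := by
  have hj := factorialFreq_pos j
  have hk := factorialFreq_pos k
  rcases Nat.lt_or_ge (max j k) 3 with hsmall | hlarge
  · have : j < 3 := by omega
    have : k < 3 := by omega
    interval_cases j <;> interval_cases k <;>
      first | omega | norm_num [factorialFreq, Nat.factorial]
  rcases Nat.lt_or_gt_of_ne hjk with hlt | hgt
  · have := factorialFreq_le_of_lt (by omega) hlt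
    rw [abs_of_nonpos (by linarith)]; linarith
  · have := factorialFreq_le_of_lt (by omega) hgt
    rw [abs_of_nonneg (by linarith)]; linarith

theorem summable_one_div_factorialFreq : Summable fun k => 1 / factorialFreq k := by
  refine .of_nonneg_of_le (fun k => (one_div_pos.2 (factorialFreq_pos k)).le) (fun k => ?_)
    (Real.summable_pow_div_factorial 2)
  have hk : ((k : ℝ) + 1) ≤ 2 ^ k := by exact_mod_cast Nat.lt_two_pow_self (n := k)
  unfold factorialFreq
  rw [one_div_div, div_le_div_iff₀ (by positivity) (by positivity)]
  nlinarith [(by positivity : (0 : ℝ) < k !)]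

theorem s_eq_half_sub_sum_cos (n : ℕ) (x : ℝ) :
    s n x = n / 2 - (∑ k ∈ range n, cos (factorialFreq k * x)) / 2 := by
  induction n with
  | zero => simp [s]
  | succ n ih =>
    have hterm : sin (x * n ! / (n + 1 : ℕ)) ^ 2 = 1 / 2 - cos (factorialFreq n * x) / 2 := by
      rw [sin_sq_eq_half_sub, factorialFreq]
      push_cast
      ring_nf
    rw [s, sum_Icc_succ_top (by omega), ← s, ih, sum_range_succ, Nat.add_sub_cancel, hterm]
    push_cast
    ring

theorem stmt_16 :
    ∀ᵐ x : ℝ, Filter.Tendsto (fun n => s n x / n) Filter.atTop (nhds (1 / 2)) := by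
  filter_upwards [ae_tendsto_sum_cos_div factorialFreq_pos
    (fun _ _ => factorialFreq_le_abs_sub) summable_one_div_factorialFreq] with x hx
  have hlim := (hx.div_const 2).const_sub (1 / 2 : ℝ)
  rw [zero_div, sub_zero] at hlim
  refine hlim.congr' ?_
  filter_upwards [eventually_ne_atTop 0] with n hn
  rw [s_eq_half_sub_sum_cos]
  generalize ∑ k ∈ range n, cos (factorialFreq k * x) = S
  field_simp
end

section
/- For each ε > 0 and a > 0, the set W(ε) = ∩_m ∪_{n ≥ m} { x ∈ ℝ : s(n,x) ∈ ((1−ε)π(n)/2, (1+ε)π(n)/2) } is a dense Gδ subset of ℝ, where s(n,x) = Σ_{k=1}^n sin²(x(k-1)!/k) and π(n) is the prime counting function. -/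
/-!
Each set `⋃ n ≥ m, {x | s n x ∈ …}` is open because `s n` is continuous, so by Baire's theorem
it suffices that each is dense. In a given interval, nested intervals produce points `x₀` and
`x₁` for which `x · (k-1)!/k` lies within `π/k` of `πℤ`, resp. of `π/2 + πℤ`, for all large `k`.
Since `∑ 1/k²` converges, `s n x₀ = O(1)` while `s n x₁ ≥ n - O(1)`. As `π(n) → ∞` and
`π(n) ≤ n + 1`, the value `π(n)/2` lies between the two for large `n`, and the intermediate value
theorem attains it inside the interval. The windows for successive `k` are nested because the
frequencies `(k-1)!/k` grow by the factor `k²/(k+1)`.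
-/

namespace FactorialSinSum

open Real Filter Topology Finset

theorem abs_sin_le_abs_sub_int_mul_pi (y : ℝ) (j : ℤ) : |sin y| ≤ |y - j * π| := by
  simpa [sin_sub_int_mul_pi, abs_mul] using abs_sin_le_abs (x := y - j * π)

theorem abs_cos_le_abs_sub_pi_div_two_add_int_mul_pi (y : ℝ) (j : ℤ) :
    |cos y| ≤ |y - (π / 2 + j * π)| := by
  simpa [sin_sub_pi_div_two, sub_sub] using abs_sin_le_abs_sub_int_mul_pi (y - π / 2) j

theorem exists_phase_window (θ t : ℝ) {c δ : ℝ} (hc : 0 < c) :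
    ∃ t', t ≤ t' ∧ t' + 2 * δ / c ≤ t + (π + 2 * δ) / c ∧
      ∀ x ∈ Set.Icc t' (t' + 2 * δ / c), ∃ j : ℤ, |x * c - (θ + j * π)| ≤ δ := by
  set j : ℤ := ⌈(t * c - θ + δ) / π⌉
  have hj₁ : t * c - θ + δ ≤ j * π := (div_le_iff₀ pi_pos).1 (Int.le_ceil _)
  have hj₂ : j * π < t * c - θ + δ + π := by
    have := Int.ceil_lt_add_one ((t * c - θ + δ) / π)
    have := (lt_div_iff₀ pi_pos).1 (by linarith : (j : ℝ) - 1 < (t * c - θ + δ) / π)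
    linarith
  refine ⟨(θ + j * π - δ) / c, ?_, ?_, fun x hx => ⟨j, abs_le.2 ⟨?_, ?_⟩⟩⟩
  · rw [le_div_iff₀ hc]; linarith
  · rw [← add_div, div_le_iff₀ hc, add_mul, div_mul_cancel₀ _ hc.ne']
    linarith
  · have := hx.1; rw [div_le_iff₀ hc] at this; linarith
  · have := hx.2; rw [← add_div, le_div_iff₀ hc] at this; linarith

noncomputable def freq (k : ℕ) : ℝ := ((k - 1).factorial : ℝ) / k

noncomputable def width (k : ℕ) : ℝ := 2 * π / ((k - 1).factorial : ℝ)

def PhaseNear (θ : ℝ) (k : ℕ) (x : ℝ) : Prop := ∃ j : ℤ, |x * freq k - (θ + j * π)| ≤ π / k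

theorem s_eq_sum_sin_sq (n : ℕ) (x : ℝ) : s n x = ∑ k ∈ Icc 1 n, sin (x * freq k) ^ 2 := by
  simp only [s, freq, mul_div_assoc]

theorem freq_succ_pos (k : ℕ) : 0 < freq (k + 1) := by
  unfold freq; positivity

theorem two_mul_pi_div_div_freq_succ (k : ℕ) :
    2 * (π / (k + 1 : ℕ)) / freq (k + 1) = width (k + 1) := by
  simp only [freq, width, Nat.add_sub_cancel]
  field_simp

-- After clearing denominators this is `k + 3 ≤ 2 * k`.
theorem pi_add_div_freq_succ_le_width {k : ℕ} (hk : 3 ≤ k) :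
    (π + 2 * (π / (k + 1 : ℕ))) / freq (k + 1) ≤ width k := by
  obtain ⟨m, rfl⟩ : ∃ m, k = m + 1 := ⟨k - 1, by omega⟩
  have hm : (2 : ℝ) ≤ m := by exact_mod_cast (by omega : 2 ≤ m)
  simp only [freq, width, Nat.add_sub_cancel, Nat.factorial_succ]
  push_cast
  rw [div_le_div_iff₀ (by positivity) (by positivity)]
  field_simp
  nlinarith [pi_pos, (Nat.cast_pos.2 (Nat.factorial_pos m) : (0 : ℝ) < m.factorial)]

theorem exists_nested_phase_window (θ t : ℝ) {k : ℕ} (hk : 3 ≤ k) :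
    ∃ t', t ≤ t' ∧ t' + width (k + 1) ≤ t + width k ∧
      ∀ x ∈ Set.Icc t' (t' + width (k + 1)), PhaseNear θ (k + 1) x := by
  obtain ⟨t', ht, hnest, hnear⟩ :=
    exists_phase_window θ t (δ := π / (k + 1 : ℕ)) (freq_succ_pos k)
  rw [two_mul_pi_div_div_freq_succ] at hnest hnear
  exact ⟨t', ht, hnest.trans (by gcongr; exact pi_add_div_freq_succ_le_width hk), hnear⟩

theorem tendsto_width : Tendsto width atTop (𝓝 0) := by
  have hfact : Tendsto (fun k : ℕ => ((k - 1).factorial : ℝ)) atTop atTop :=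
    tendsto_natCast_atTop_atTop.comp <|
      tendsto_atTop_mono (fun k => Nat.self_le_factorial (k - 1)) (tendsto_sub_atTop_nat 1)
  have := hfact.inv_tendsto_atTop.const_mul (2 * π)
  rwa [mul_zero] at this

theorem exists_mem_Ioo_forall_ge_phaseNear (θ : ℝ) {u v : ℝ} (huv : u < v) :
    ∃ x ∈ Set.Ioo u v, ∃ K, ∀ k ≥ K, PhaseNear θ k x := by
  obtain ⟨k₀, hsmall, hk₀⟩ :=
    ((tendsto_width.eventually (gt_mem_nhds (half_pos (sub_pos.2 huv)))).and
      (eventually_ge_atTop 3)).exists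
  have step (i : ℕ) (t : ℝ) := exists_nested_phase_window θ t (k := k₀ + i) (by omega)
  choose next hle hnest hnear using step
  let a : ℕ → ℝ := fun i => Nat.rec (u + (v - u) / 4) next i
  have hanti : Antitone fun i => Set.Icc (a i) (a i + width (k₀ + i)) :=
    antitone_nat_of_succ_le fun i => Set.Icc_subset_Icc (hle i (a i)) (hnest i (a i))
  have hx := ciSup_mem_iInter_Icc_of_antitone_Icc hanti
    fun i => le_add_of_nonneg_right (by unfold width; positivity)
  rw [Set.mem_iInter] at hx
  refine ⟨⨆ i, a i, ?_, k₀ + 1, fun k hk => ?_⟩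
  · obtain ⟨h₁, h₂⟩ := hx 0
    simp only [add_zero] at h₂
    constructor <;> linarith [show a 0 = u + (v - u) / 4 from rfl]
  · obtain ⟨i, rfl⟩ : ∃ i, k = k₀ + i + 1 := ⟨k - k₀ - 1, by omega⟩
    exact hnear i (a i) _ (hx (i + 1))

theorem sin_sq_le_of_phaseNear_zero {k : ℕ} {x : ℝ} (h : PhaseNear 0 k x) :
    sin (x * freq k) ^ 2 ≤ (π / k) ^ 2 := by
  obtain ⟨j, hj⟩ := h
  rw [zero_add] at hj
  exact sq_le_sq.2 ((abs_sin_le_abs_sub_int_mul_pi _ j).trans (hj.trans (le_abs_self _)))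

theorem one_sub_le_sin_sq_of_phaseNear_pi_div_two {k : ℕ} {x : ℝ} (h : PhaseNear (π / 2) k x) :
    1 - (π / k) ^ 2 ≤ sin (x * freq k) ^ 2 := by
  obtain ⟨j, hj⟩ := h
  have := sq_le_sq.2 ((abs_cos_le_abs_sub_pi_div_two_add_int_mul_pi _ j).trans
    (hj.trans (le_abs_self _)))
  linarith [sin_sq_add_cos_sq (x * freq k)]

theorem sum_pi_div_sq_le (n : ℕ) : ∑ k ∈ Icc 1 n, (π / k) ^ 2 ≤ 2 * π ^ 2 := by
  have hIcc : Icc 1 n = Ioo 0 (n + 1) := by ext; simp only [mem_Icc, mem_Ioo]; omega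
  calc ∑ k ∈ Icc 1 n, (π / k) ^ 2 = π ^ 2 * ∑ k ∈ Ioo 0 (n + 1), ((k : ℝ) ^ 2)⁻¹ := by
        simp only [div_pow, div_eq_mul_inv (π ^ 2), ← mul_sum, hIcc]
    _ ≤ π ^ 2 * (2 / ((0 : ℕ) + 1)) := by gcongr; exact sum_Ioo_inv_sq_le 0 (n + 1)
    _ = 2 * π ^ 2 := by norm_num; ring

theorem s_le_of_forall_ge_phaseNear_zero {x : ℝ} {K : ℕ} (h : ∀ k ≥ K, PhaseNear 0 k x) (n : ℕ) :
    s n x ≤ K + 2 * π ^ 2 := by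
  have hterm : ∀ k ∈ Icc 1 n,
      sin (x * freq k) ^ 2 ≤ (if k < K then 1 else 0) + (π / k) ^ 2 := by
    intro k _
    split_ifs with hk
    · linarith [sin_sq_le_one (x * freq k), sq_nonneg (π / k)]
    · simpa using sin_sq_le_of_phaseNear_zero (h k (not_lt.1 hk))
  have hcount : ∑ k ∈ Icc 1 n, (if k < K then (1 : ℝ) else 0) ≤ K := by
    rw [sum_boole]
    exact_mod_cast (card_le_card (fun k hk => by simpa using (mem_filter.1 hk).2 :
      (Icc 1 n).filter (· < K) ⊆ range K)).trans (card_range K).le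
  rw [s_eq_sum_sin_sq]
  calc _ ≤ _ := sum_le_sum hterm
    _ ≤ _ := by rw [sum_add_distrib]; linarith [sum_pi_div_sq_le n]

theorem le_s_of_forall_ge_phaseNear_pi_div_two {x : ℝ} {K : ℕ}
    (h : ∀ k ≥ K, PhaseNear (π / 2) k x) (n : ℕ) : (n : ℝ) - K - 2 * π ^ 2 ≤ s n x := by
  have hterm : ∀ k ∈ Icc 1 n,
      (if K ≤ k then 1 else 0) - (π / k) ^ 2 ≤ sin (x * freq k) ^ 2 := by
    intro k _
    split_ifs with hk
    · exact one_sub_le_sin_sq_of_phaseNear_pi_div_two (h k hk)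
    · linarith [sq_nonneg (sin (x * freq k)), sq_nonneg (π / k)]
  have hcount : (n : ℝ) - K ≤ ∑ k ∈ Icc 1 n, (if K ≤ k then (1 : ℝ) else 0) := by
    rw [sum_boole]
    have hsub : Icc (K + 1) n ⊆ (Icc 1 n).filter (K ≤ ·) := fun k hk => by
      simp only [mem_Icc, mem_filter] at hk ⊢; omega
    have hcard := card_le_card hsub
    rw [Nat.card_Icc] at hcard
    have : (n : ℝ) ≤ K + #((Icc 1 n).filter (K ≤ ·)) := by
      exact_mod_cast (by omega : n ≤ K + #((Icc 1 n).filter (K ≤ ·)))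
    linarith
  rw [s_eq_sum_sin_sq]
  calc _ ≤ _ := by rw [sum_sub_distrib]; linarith [sum_pi_div_sq_le n]
    _ ≤ _ := sum_le_sum hterm

theorem continuous_s (n : ℕ) : Continuous (s n) := by
  unfold s; fun_prop

def nearHalfPrimeCounting (ε : ℝ) (n : ℕ) : Set ℝ :=
  s n ⁻¹' Set.Ioo ((1 - ε) * (Nat.primeCounting n : ℝ) / 2)
    ((1 + ε) * (Nat.primeCounting n : ℝ) / 2)

theorem isOpen_nearHalfPrimeCounting (ε : ℝ) (n : ℕ) : IsOpen (nearHalfPrimeCounting ε n) :=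
  isOpen_Ioo.preimage (continuous_s n)

theorem dense_biUnion_nearHalfPrimeCounting {ε : ℝ} (hε : 0 < ε) (m : ℕ) :
    Dense (⋃ n ≥ m, nearHalfPrimeCounting ε n) := by
  refine dense_iff_exists_between.2 fun u v huv => ?_
  obtain ⟨x₀, hx₀, K₀, h₀⟩ := exists_mem_Ioo_forall_ge_phaseNear 0 huv
  obtain ⟨x₁, hx₁, K₁, h₁⟩ := exists_mem_Ioo_forall_ge_phaseNear (π / 2) huv
  obtain ⟨n, hnm, hpos, hlow, hn⟩ := ((eventually_ge_atTop m).and <|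
    (Nat.tendsto_primeCounting.eventually_ge_atTop 1).and <|
    ((tendsto_natCast_atTop_atTop.comp Nat.tendsto_primeCounting).eventually_ge_atTop
      (2 * (K₀ + 2 * π ^ 2))).and <|
    tendsto_natCast_atTop_atTop.eventually_ge_atTop (2 * (K₁ + 2 * π ^ 2) + 1)).exists
  rw [Function.comp_apply] at hlow
  have hp : (Nat.primeCounting n : ℝ) ≤ n + 1 := by
    exact_mod_cast (Nat.count_le _ : Nat.primeCounting n ≤ n + 1)
  have hs₀ : s n x₀ ≤ Nat.primeCounting n / 2 := by
    linarith [s_le_of_forall_ge_phaseNear_zero h₀ n]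
  have hs₁ : Nat.primeCounting n / 2 ≤ s n x₁ := by
    linarith [le_s_of_forall_ge_phaseNear_pi_div_two h₁ n]
  obtain ⟨x, hx, hsx⟩ := intermediate_value_uIcc (continuous_s n).continuousOn
    (Set.Icc_subset_uIcc ⟨hs₀, hs₁⟩)
  have hp₀ : (0 : ℝ) < Nat.primeCounting n := by exact_mod_cast hpos
  refine ⟨x, Set.mem_biUnion hnm ?_, Set.ordConnected_Ioo.uIcc_subset hx₀ hx₁ hx⟩
  simp only [nearHalfPrimeCounting, Set.mem_preimage, hsx, Set.mem_Ioo]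
  constructor <;> nlinarith

end FactorialSinSum

theorem stmt_18 (ε : ℝ) (hε : 0 < ε) :
    Dense (⋂ m : ℕ, ⋃ n ≥ m, {x : ℝ |
        s n x ∈ Set.Ioo ((1 - ε) * (Nat.primeCounting n : ℝ) / 2)
          ((1 + ε) * (Nat.primeCounting n : ℝ) / 2)}) ∧
    IsGδ (⋂ m : ℕ, ⋃ n ≥ m, {x : ℝ |
        s n x ∈ Set.Ioo ((1 - ε) * (Nat.primeCounting n : ℝ) / 2)
          ((1 + ε) * (Nat.primeCounting n : ℝ) / 2)}) := by
  have hopen (m : ℕ) : IsOpen (⋃ n ≥ m, FactorialSinSum.nearHalfPrimeCounting ε n) :=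
    isOpen_biUnion fun n _ => FactorialSinSum.isOpen_nearHalfPrimeCounting ε n
  exact ⟨dense_iInter_of_isOpen hopen (FactorialSinSum.dense_biUnion_nearHalfPrimeCounting hε),
    .iInter fun m => (hopen m).isGδ⟩
end

section
/- For generic x ∈ ℝ (i.e., for all x in a dense Gδ set), 1/2 is a limit point of the sequence s(n,x)/π(n), where s(n,x) = Σ_{k=1}^n sin²(x(k-1)!/k) and π(n) is the prime counting function. -/
/-! Steer the phase x·(k-1)!/k to π/4 modulo π when k is prime and to 0 modulo π otherwise,
with error 4/k. Consecutive scales (k-1)!/k grow by a factor of about k, so the phases can be fixed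
one after another on nested intervals of lengths 8/(k-1)!, and such an x exists in every interval.
For it the k-th term of s(n,x) is 1/2 + O(1/k) at primes and O(1/k²) otherwise; as
∑_{p ≤ n} 1/p ≤ √(2π(n)) by Cauchy–Schwarz, s(n,x)/π(n) → 1/2. This gives a dense set on which
1/2 is even the limit. The set of x at which 1/2 is a cluster point of s(n,x)/π(n) contains it,
and it is a Gδ, as for any sequence of continuous functions. -/

open Real Filter Topology Finset

lemma sin_sq_add_int_mul_pi (t : ℝ) (m : ℤ) : sin (t + m * π) ^ 2 = sin t ^ 2 := by
  rw [sin_add_int_mul_pi, mul_pow, ← sq_abs ((-1 : ℝ) ^ m)]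
  simp

lemma abs_sin_sq_sub_sin_sq_le (a b : ℝ) : |sin a ^ 2 - sin b ^ 2| ≤ |a - b| := by
  have h := abs_cos_sub_cos_le (2 * b) (2 * a)
  rw [← mul_sub, abs_mul, abs_two, abs_sub_comm b] at h
  rw [sin_sq_eq_half_sub, sin_sq_eq_half_sub]
  calc |1 / 2 - cos (2 * a) / 2 - (1 / 2 - cos (2 * b) / 2)|
      = |cos (2 * b) - cos (2 * a)| / 2 := by rw [← abs_two, ← abs_div, abs_two]; ring_nf
    _ ≤ |a - b| := by linarith

lemma abs_sin_sq_sub_half_le {y ε : ℝ} {m : ℤ} (h : |y - (m * π + π / 4)| ≤ ε) :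
    |sin y ^ 2 - 1 / 2| ≤ ε := by
  have hπ4 : sin (π / 4 + m * π) ^ 2 = 1 / 2 := by
    rw [sin_sq_add_int_mul_pi, sin_pi_div_four, div_pow, sq_sqrt zero_le_two]
    norm_num
  calc |sin y ^ 2 - 1 / 2| = |sin y ^ 2 - sin (π / 4 + m * π) ^ 2| := by rw [hπ4]
    _ ≤ |y - (π / 4 + m * π)| := abs_sin_sq_sub_sin_sq_le _ _
    _ ≤ ε := by rwa [add_comm (π / 4)]

lemma sin_sq_le_sq_of_abs_sub_int_mul_pi_le {y ε : ℝ} {m : ℤ} (h : |y - m * π| ≤ ε) :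
    sin y ^ 2 ≤ ε ^ 2 :=
  calc sin y ^ 2 = sin (y - m * π + m * π) ^ 2 := by rw [sub_add_cancel]
    _ = sin (y - m * π) ^ 2 := sin_sq_add_int_mul_pi _ _
    _ ≤ (y - m * π) ^ 2 := sin_sq_le_sq
    _ ≤ ε ^ 2 := sq_le_sq' (abs_le.1 h).1 (abs_le.1 h).2

lemma sum_inv_sq_le_two (t : Finset ℕ) : ∑ k ∈ t, ((k : ℝ) ^ 2)⁻¹ ≤ 2 := by
  obtain ⟨N, hN⟩ : ∃ N, t ⊆ range N := ⟨t.sup id + 1, fun k hk =>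
    mem_range.2 (Nat.lt_succ_of_le (le_sup (f := id) hk))⟩
  calc ∑ k ∈ t, ((k : ℝ) ^ 2)⁻¹ ≤ ∑ k ∈ range N, ((k : ℝ) ^ 2)⁻¹ :=
        sum_le_sum_of_subset_of_nonneg hN fun _ _ _ => by positivity
    _ = ∑ k ∈ Ioo 0 N, ((k : ℝ) ^ 2)⁻¹ := by
        rcases N.eq_zero_or_pos with rfl | hN
        · simp
        · rw [range_eq_Ico, sum_eq_sum_Ico_succ_bot hN, Finset.Ico_add_one_left_eq_Ioo]
          simp
    _ ≤ 2 := by simpa using sum_Ioo_inv_sq_le (α := ℝ) 0 N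

lemma sum_inv_le_sqrt_two_mul_card (t : Finset ℕ) : ∑ k ∈ t, (k : ℝ)⁻¹ ≤ √(2 * #t) := by
  apply le_sqrt_of_sq_le
  calc (∑ k ∈ t, (k : ℝ)⁻¹) ^ 2 ≤ #t * ∑ k ∈ t, ((k : ℝ)⁻¹) ^ 2 := sq_sum_le_card_mul_sum_sq
    _ ≤ #t * 2 := by gcongr; simpa [inv_pow] using sum_inv_sq_le_two t
    _ = 2 * #t := mul_comm _ _

lemma exists_Icc_mul_near_int_mul_pi_add {c L L' : ℝ} (hc : 0 < c) (hL : π / c + L ≤ L')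
    (a t : ℝ) : ∃ b, a ≤ b ∧ b + L ≤ a + L' ∧
      ∀ y ∈ Set.Icc b (b + L), ∃ m : ℤ, |y * c - (m * π + t)| ≤ L * c / 2 := by
  set m := ⌈(a * c - t + L * c / 2) / π⌉
  have hm : m * π - π < a * c - t + L * c / 2 ∧ a * c - t + L * c / 2 ≤ m * π := by
    constructor
    · have := Int.ceil_lt_add_one ((a * c - t + L * c / 2) / π)
      rw [← sub_lt_iff_lt_add, lt_div_iff₀ pi_pos] at this
      linarith
    · exact (div_le_iff₀ pi_pos).1 (Int.le_ceil _)
  refine ⟨(m * π + t - L * c / 2) / c, ?_, ?_, fun y hy => ⟨m, ?_⟩⟩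
  · rw [le_div_iff₀ hc]
    linarith
  · have : (m * π + t - L * c / 2) / c < a + π / c := by
      rw [div_lt_iff₀ hc, add_mul, div_mul_cancel₀ _ hc.ne']
      linarith
    linarith
  · have h₁ := mul_le_mul_of_nonneg_right hy.1 hc.le
    have h₂ := mul_le_mul_of_nonneg_right hy.2 hc.le
    rw [div_mul_cancel₀ _ hc.ne'] at h₁
    rw [add_mul, div_mul_cancel₀ _ hc.ne'] at h₂
    rw [abs_le]
    constructor <;> linarith

lemma exists_mem_Icc_forall_of_nested {L : ℕ → ℝ} {P : ℕ → ℝ → Prop} (hL : ∀ j, 0 ≤ L j)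
    (hstep : ∀ j a, ∃ b, a ≤ b ∧ b + L (j + 1) ≤ a + L j ∧
      ∀ y ∈ Set.Icc b (b + L (j + 1)), P j y) (a₀ : ℝ) :
    ∃ x ∈ Set.Icc a₀ (a₀ + L 0), ∀ j, P j x := by
  choose g hg_le hg_add hg_mem using hstep
  let a : ℕ → ℝ := fun j => Nat.rec a₀ g j
  have ha : Monotone a := monotone_nat_of_le_succ fun j => hg_le j (a j)
  have ha' : Antitone fun j => a j + L j := antitone_nat_of_succ_le fun j => hg_add j (a j)
  have hx := Set.mem_iInter.1 (ha.ciSup_mem_iInter_Icc_of_antitone ha' fun j => by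
    simpa using hL j)
  exact ⟨⨆ j, a j, hx 0, fun j => hg_mem j (a j) _ (hx (j + 1))⟩

lemma pi_div_factorial_ratio_add_le {N : ℕ} (hN : 2 ≤ N) :
    π / ((N + 1).factorial / ((N + 2 : ℕ) : ℝ)) + 8 / (N + 1).factorial ≤ 8 / N.factorial := by
  have hN' : (2 : ℝ) ≤ N := by exact_mod_cast hN
  push_cast
  rw [div_div_eq_mul_div, ← add_div, Nat.factorial_succ, Nat.cast_mul,
    div_le_div_iff₀ (by positivity) (by positivity)]
  push_cast
  have key : π * (N + 2) + 8 ≤ 8 * (N + 1) := by nlinarith [pi_le_four]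
  nlinarith [mul_le_mul_of_nonneg_right key (Nat.cast_nonneg (α := ℝ) N.factorial)]

def NearPhases (φ : ℕ → ℝ) (K : ℕ) (x : ℝ) : Prop :=
  ∀ k, K ≤ k → ∃ m : ℤ, |x * (k - 1).factorial / k - (m * π + φ k)| ≤ 4 / k

lemma exists_nearPhases (φ : ℕ → ℝ) {N : ℕ} (hN : 2 ≤ N) (x₀ : ℝ) :
    ∃ x ∈ Set.Icc x₀ (x₀ + 8 / N.factorial), NearPhases φ (N + 2) x := by
  obtain ⟨x, hx, hgood⟩ := exists_mem_Icc_forall_of_nested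
    (L := fun j => 8 / (N + j).factorial)
    (P := fun j y => ∃ m : ℤ, |y * (N + j + 2 - 1).factorial / (N + j + 2 : ℕ) -
      (m * π + φ (N + j + 2))| ≤ 4 / (N + j + 2 : ℕ))
    (fun j => by positivity) (fun j a => by
      obtain ⟨b, hab, hb, hy⟩ := exists_Icc_mul_near_int_mul_pi_add
        (by positivity) (pi_div_factorial_ratio_add_le (N := N + j) (by omega)) a (φ (N + j + 2))
      have hlen : 8 / ((N + j + 1).factorial : ℝ) * ((N + j + 1).factorial / (N + j + 2 : ℕ)) / 2
          = 4 / (N + j + 2 : ℕ) := by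
        field_simp
        ring
      refine ⟨b, hab, hb, fun y hy' => ?_⟩
      obtain ⟨m, hm⟩ := hy y hy'
      rw [hlen, ← mul_div_assoc] at hm
      exact ⟨m, hm⟩) x₀
  refine ⟨x, by simpa using hx, fun k hk => ?_⟩
  obtain ⟨j, rfl⟩ : ∃ j, k = N + j + 2 := ⟨k - (N + 2), by omega⟩
  exact hgood j

noncomputable def primePhase (k : ℕ) : ℝ := if k.Prime then π / 4 else 0

lemma abs_sin_sq_sub_le {x : ℝ} {K : ℕ}
    (hx : NearPhases primePhase K x)
    (k : ℕ) :
    |sin (x * (k - 1).factorial / k) ^ 2 - (if k.Prime then 1 / 2 else 0)| ≤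
      (if k < K then 1 else 0) + (if k.Prime then (4 / k : ℝ) else 0) + 16 * ((k : ℝ) ^ 2)⁻¹ := by
  set y := x * (k - 1).factorial / k
  by_cases hkK : k < K
  · have hle_one : |sin y ^ 2 - (if k.Prime then 1 / 2 else 0)| ≤ 1 := by
      have := sin_sq_le_one y
      split_ifs <;> rw [abs_le] <;> constructor <;> nlinarith [sq_nonneg (sin y)]
    have hprime : (0 : ℝ) ≤ if k.Prime then (4 / k : ℝ) else 0 := by split_ifs <;> positivity
    have hsq : (0 : ℝ) ≤ 16 * ((k : ℝ) ^ 2)⁻¹ := by positivity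
    rw [if_pos hkK]
    linarith
  obtain ⟨m, hm⟩ := hx k (not_lt.1 hkK)
  simp only [primePhase, if_neg hkK, zero_add] at hm ⊢
  split_ifs at hm ⊢ with hp
  · have : (0 : ℝ) ≤ 16 * ((k : ℝ) ^ 2)⁻¹ := by positivity
    linarith [abs_sin_sq_sub_half_le hm]
  · rw [sub_zero, zero_add, abs_of_nonneg (sq_nonneg _)]
    calc sin y ^ 2 ≤ (4 / k) ^ 2 := sin_sq_le_sq_of_abs_sub_int_mul_pi_le (by simpa using hm)
      _ = 16 * ((k : ℝ) ^ 2)⁻¹ := by ring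

lemma abs_s_sub_primeCounting_le {x : ℝ} {K : ℕ}
    (hx : NearPhases primePhase K x)
    (n : ℕ) : |s n x - n.primeCounting / 2| ≤ (K + 32) + 4 * √2 * √(n.primeCounting) := by
  have hπ : ∑ k ∈ Icc 1 n, (if k.Prime then (1 / 2 : ℝ) else 0) = n.primeCounting / 2 := by
    rw [← sum_filter, sum_const, ← Nat.primesLE_eq_filter_Icc_one,
      Nat.primesLE_card_eq_primeCounting, nsmul_eq_mul]
    ring
  have hsmall : ∑ k ∈ Icc 1 n, (if k < K then (1 : ℝ) else 0) ≤ K := by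
    rw [sum_boole]
    exact_mod_cast (card_le_card fun k hk => mem_range.2 (mem_filter.1 hk).2).trans
      (card_range K).le
  have hprime : ∑ k ∈ Icc 1 n, (if k.Prime then 4 / (k : ℝ) else 0) ≤
      4 * √2 * √(n.primeCounting) := by
    rw [← sum_filter, ← Nat.primesLE_eq_filter_Icc_one, mul_assoc, ← sqrt_mul zero_le_two,
      ← Nat.primesLE_card_eq_primeCounting]
    simp_rw [div_eq_mul_inv (4 : ℝ), ← mul_sum]
    gcongr
    exact sum_inv_le_sqrt_two_mul_card n.primesLE
  have hsq : ∑ k ∈ Icc 1 n, 16 * ((k : ℝ) ^ 2)⁻¹ ≤ 32 := by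
    rw [← mul_sum]
    linarith [sum_inv_sq_le_two (Icc 1 n)]
  rw [s, ← hπ, ← sum_sub_distrib]
  refine (abs_sum_le_sum_abs _ _).trans ((sum_le_sum fun k _ => abs_sin_sq_sub_le hx k).trans ?_)
  rw [sum_add_distrib, sum_add_distrib]
  linarith

lemma tendsto_div_of_abs_sub_le_sqrt {ι : Type*} {l : Filter ι} {u v : ι → ℝ} {a C D : ℝ}
    (hv : Tendsto v l atTop) (h : ∀ i, |u i - a * v i| ≤ C + D * √(v i)) :
    Tendsto (fun i => u i / v i) l (𝓝 a) := by
  have hbound : Tendsto (fun i => C * (v i)⁻¹ + D * (√(v i))⁻¹) l (𝓝 0) := by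
    simpa using ((tendsto_inv_atTop_zero.comp hv).const_mul C).add
      ((tendsto_inv_atTop_zero.comp (tendsto_sqrt_atTop.comp hv)).const_mul D)
  rw [← tendsto_sub_nhds_zero_iff]
  refine squeeze_zero_norm' ?_ hbound
  filter_upwards [hv.eventually_gt_atTop 0] with i hi
  calc ‖u i / v i - a‖ = |u i - a * v i| / v i := by
        rw [norm_eq_abs, div_sub' hi.ne', abs_div, abs_of_pos hi, mul_comm]
    _ ≤ (C + D * √(v i)) / v i := by gcongr; exact h i
    _ = C * (v i)⁻¹ + D * (√(v i))⁻¹ := by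
        rw [add_div, mul_div_assoc, sqrt_div_self', div_eq_mul_inv, one_div]

lemma isGδ_setOf_mapClusterPt {X Y : Type*} [TopologicalSpace X] [PseudoMetricSpace Y]
    {f : ℕ → X → Y} (hf : ∀ n, Continuous (f n)) (a : Y) :
    IsGδ {x | MapClusterPt a atTop fun n => f n x} := by
  have : {x | MapClusterPt a atTop fun n => f n x} =
      ⋂ (i : ℕ) (N : ℕ), ⋃ n ≥ N, f n ⁻¹' Metric.ball a (1 / (i + 1)) := by
    ext x
    simp [Metric.nhds_basis_ball_inv_nat_succ.mapClusterPt_iff_frequently, frequently_atTop]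
  rw [this]
  exact .iInter fun i => .iInter fun N =>
    (isOpen_biUnion fun n _ => Metric.isOpen_ball.preimage (hf n)).isGδ

lemma dense_setOf_tendsto_s_div_primeCounting :
    Dense {x | Tendsto (fun n => s n x / n.primeCounting) atTop (𝓝 (1 / 2))} := by
  rw [Metric.dense_iff]
  intro x₀ r hr
  obtain ⟨N, hN⟩ := exists_nat_gt (max 2 (8 / r))
  have hN2 : 2 ≤ N := by exact_mod_cast (le_max_left _ _).trans hN.le
  obtain ⟨x, hx, hgood⟩ := exists_nearPhases primePhase hN2 x₀
  have hlen : 8 / (N.factorial : ℝ) < r := by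
    rw [div_lt_iff₀ (by positivity), ← div_lt_iff₀' hr]
    exact ((le_max_right _ _).trans_lt hN).trans_le (by exact_mod_cast N.self_le_factorial)
  refine ⟨x, ?_, tendsto_div_of_abs_sub_le_sqrt (C := N + 2 + 32) (D := 4 * √2)
    (tendsto_natCast_atTop_atTop.comp Nat.tendsto_primeCounting) fun n => ?_⟩
  · rw [Metric.mem_ball, dist_eq, abs_lt]
    constructor <;> linarith [hx.1, hx.2]
  · simpa [div_eq_inv_mul] using abs_s_sub_primeCounting_le hgood n

theorem stmt_19 :
    ∃ G : Set ℝ, Dense G ∧ IsGδ G ∧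
      ∀ x ∈ G, MapClusterPt (1 / 2 : ℝ) Filter.atTop
        (fun n : ℕ => s n x / (Nat.primeCounting n : ℝ)) :=
  ⟨_, dense_setOf_tendsto_s_div_primeCounting.mono fun _ hx => hx.mapClusterPt,
    isGδ_setOf_mapClusterPt (fun n => by unfold s; fun_prop) _, fun _ hx => hx⟩
end
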